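/- arXiv:1611.04345 — 6 statements merged into one kernel-verified Lean document; each statement's English description precedes it below -/
import Mathlib

section
/- Let I ⊆ S = ℂ[α₁,…,αₙ] be an ideal such that Q = S/I is a finite-dimensional ℂ-vector space, Q is local with maximal ideal m equal to the image of (α₁,…,αₙ) (equivalently, each αᵢ is nilpotent modulo I), and the annihilator {a ∈ Q : a·m = 0} of m in Q is a one-dimensional ℂ-vector space. Then there exists a polynomial F ∈ ℂ[x₁,…,xₙ] with I = Ann(F), i.e., Q is the apolar algebra of F. -/
noncomputable section

open MvPolynomial

namespace Apolarity

variable {n : ℕ}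

/-- Partial derivatives commute. -/
lemma pderiv_comm {σ : Type*} {R : Type*} [CommSemiring R] (i j : σ)
    (p : MvPolynomial σ R) :
    MvPolynomial.pderiv i (MvPolynomial.pderiv j p) =
      MvPolynomial.pderiv j (MvPolynomial.pderiv i p) := by
  classical
  induction p using MvPolynomial.induction_on' with
  | monomial s a =>
      simp only [pderiv_monomial]
      rcases eq_or_ne i j with rfl | hij
      · rfl
      · rw [tsub_right_comm]
        congr 1
        rw [Finsupp.tsub_apply, Finsupp.tsub_apply, Finsupp.single_eq_of_ne hij,
          Finsupp.single_eq_of_ne (Ne.symm hij)]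
        simp only [Nat.sub_zero]
        ring
  | add p q hp hq => simp [hp, hq]

/-- The set of partial-derivative operators on `P = ℂ[x₁,…,xₙ]`. -/
def pdSet (n : ℕ) : Set (Module.End ℂ (MvPolynomial (Fin n) ℂ)) :=
  Set.range fun i : Fin n => (MvPolynomial.pderiv i).toLinearMap

lemma pdSet_comm : ∀ a ∈ pdSet n, ∀ b ∈ pdSet n, a * b = b * a := by
  rintro _ ⟨i, rfl⟩ _ ⟨j, rfl⟩
  refine LinearMap.ext fun p => ?_
  simp only [Module.End.mul_apply]
  exact pderiv_comm i j p

/-- The algebra map `S = ℂ[α₁,…,αₙ] → End_ℂ(P)` sending `αᵢ` to `∂/∂xᵢ`.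
`D n σ F` is the action `σ∘F` of `σ ∈ S` on `F ∈ P = ℂ[x₁,…,xₙ]`. -/
def D (n : ℕ) : MvPolynomial (Fin n) ℂ →ₐ[ℂ] Module.End ℂ (MvPolynomial (Fin n) ℂ) :=
  letI : CommSemiring (Algebra.adjoin ℂ (pdSet n)) :=
    Algebra.adjoinCommSemiringOfComm ℂ pdSet_comm
  ((Algebra.adjoin ℂ (pdSet n)).val).comp
    (MvPolynomial.aeval fun i : Fin n =>
      (⟨(MvPolynomial.pderiv i).toLinearMap,
        Algebra.subset_adjoin (Set.mem_range_self i)⟩ : Algebra.adjoin ℂ (pdSet n)))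

@[simp] lemma D_X (i : Fin n) (F : MvPolynomial (Fin n) ℂ) :
    D n (X i) F = MvPolynomial.pderiv i F := by
  simp [D]

/-- The apolar ideal `Ann(F) = {σ ∈ S : σ∘F = 0}`. -/
def annIdeal (F : MvPolynomial (Fin n) ℂ) : Ideal (MvPolynomial (Fin n) ℂ) where
  carrier := {σ | D n σ F = 0}
  zero_mem' := by simp
  add_mem' := by
    intro a b ha hb
    simp only [Set.mem_setOf_eq, map_add, LinearMap.add_apply] at *
    rw [ha, hb, add_zero]
  smul_mem' := by
    intro c x hx
    simp only [Set.mem_setOf_eq, smul_eq_mul, map_mul, Module.End.mul_apply] at *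
    rw [hx, map_zero]

/-- The apolar algebra `Apolar(F) = S/Ann(F)`. -/
abbrev Apolar (F : MvPolynomial (Fin n) ℂ) := MvPolynomial (Fin n) ℂ ⧸ annIdeal F

/-- The `ℂ`-linear map `σ ↦ σ∘F`. -/
def applyAt (F : MvPolynomial (Fin n) ℂ) :
    MvPolynomial (Fin n) ℂ →ₗ[ℂ] MvPolynomial (Fin n) ℂ where
  toFun σ := D n σ F
  map_add' a b := by simp only [map_add, LinearMap.add_apply]
  map_smul' c a := by simp only [map_smul, LinearMap.smul_apply, RingHom.id_apply]

/-- `S_r∘F`, the image of the degree-`r` part of `S` acting on `F`. -/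
def SrF (r : ℕ) (F : MvPolynomial (Fin n) ℂ) : Submodule ℂ (MvPolynomial (Fin n) ℂ) :=
  (MvPolynomial.homogeneousSubmodule (Fin n) ℂ r).map (applyAt F)

/-- The perpendicular space of an ideal `J ⊆ S`:
polynomials killed by every element of `J`. -/
def perp (J : Ideal (MvPolynomial (Fin n) ℂ)) : Submodule ℂ (MvPolynomial (Fin n) ℂ) :=
  ⨅ σ ∈ J, LinearMap.ker (D n σ)

lemma mem_perp {J : Ideal (MvPolynomial (Fin n) ℂ)} {G : MvPolynomial (Fin n) ℂ} :
    G ∈ perp J ↔ ∀ σ ∈ J, D n σ G = 0 := by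
  simp [perp, Submodule.mem_iInf, LinearMap.mem_ker]

/-- The image of the ideal `(α₁,…,αₙ)` in `Q = S/I`. -/
def mQuot (I : Ideal (MvPolynomial (Fin n) ℂ)) : Ideal (MvPolynomial (Fin n) ℂ ⧸ I) :=
  Ideal.map (Ideal.Quotient.mk I)
    (Ideal.span (Set.range (X : Fin n → MvPolynomial (Fin n) ℂ)))

/-- The annihilator `{a ∈ Q : a·m = 0}` of `m` in `Q = S/I`, as a `ℂ`-subspace. -/
def socleQuot (I : Ideal (MvPolynomial (Fin n) ℂ)) :
    Submodule ℂ (MvPolynomial (Fin n) ℂ ⧸ I) where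
  carrier := {a | ∀ b ∈ mQuot I, a * b = 0}
  zero_mem' := fun b _ => zero_mul b
  add_mem' := by
    intro a a' ha ha' b hb
    rw [add_mul, ha b hb, ha' b hb, add_zero]
  smul_mem' := by
    intro c a ha b hb
    rw [smul_mul_assoc, ha b hb, smul_zero]

/-!
`Q = S/I` is Artinian with unique maximal ideal `m`, so `m` is nilpotent, and its socle is a line
`ℂ s`. Choose a functional `φ` on `Q` with `φ s ≠ 0`. Every nonzero principal ideal of `Q` meets
the socle, so the pairing `(a, b) ↦ φ (a b)` is nondegenerate and `I = {σ | ∀ τ, φ (τ σ) = 0}`.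
Since `(αᵈ ∘ xᵉ)(0) = d! δ_{de}` and `φ` vanishes on monomials of high degree, the polynomial
`F = ∑_d φ(αᵈ)/d! xᵈ` satisfies `(ρ ∘ F)(0) = φ ρ` for all `ρ ∈ S`; hence
`Ann(F) = {σ | ∀ τ, (τ σ ∘ F)(0) = 0} = I`.
-/

end Apolarity

namespace MvPolynomial

theorem iterate_pderiv_monomial {σ R : Type*} [CommSemiring R] (i : σ) (b : ℕ)
    (e : σ →₀ ℕ) (c : R) :
    (pderiv i)^[b] (monomial e c) =
      monomial (e - Finsupp.single i b) (c * (e i).descFactorial b) := by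
  induction b with
  | zero => simp
  | succ b ih =>
    rw [Function.iterate_succ_apply', ih, pderiv_monomial, tsub_tsub, ← Finsupp.single_add,
      Finsupp.tsub_apply, Finsupp.single_eq_same, Nat.descFactorial_succ, Nat.cast_mul,
      mul_comm ((e i - b : ℕ) : R), mul_assoc]

theorem monomial_one_mem_of_X_pow_mem {σ R : Type*} [CommSemiring R]
    {I : Ideal (MvPolynomial σ R)} {N : ℕ} (hX : ∀ i, X i ^ N ∈ I) {d : σ →₀ ℕ} {i : σ}
    (hi : N ≤ d i) : monomial d (1 : R) ∈ I := by
  rw [← add_tsub_cancel_of_le (Finsupp.single_le_iff.mpr hi), ← mul_one (1 : R),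
    ← monomial_mul, ← X_pow_eq_monomial]
  exact I.mul_mem_right _ (hX i)

end MvPolynomial

section SocleDuality

variable {A : Type*} [CommRing A] {m : Ideal A} {N : ℕ}

theorem exists_mul_ne_zero_forall_mem_mul_eq_zero (hm : m ^ N = ⊥) {a : A} (ha : a ≠ 0) :
    ∃ b, b * a ≠ 0 ∧ ∀ x ∈ m, b * a * x = 0 := by
  classical
  have hex : ∃ k, ∀ b ∈ m ^ k, b * a = 0 := ⟨N, by simp [hm]⟩
  obtain ⟨j, hj⟩ : ∃ j, Nat.find hex = j + 1 :=
    Nat.exists_eq_succ_of_ne_zero fun h0 => ha <| by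
      simpa using Nat.find_spec hex 1 (by simp [h0])
  obtain ⟨b, hb, hba⟩ : ∃ b ∈ m ^ j, b * a ≠ 0 := by
    simpa using Nat.find_min hex (hj ▸ j.lt_succ_self)
  refine ⟨b, hba, fun x hx => ?_⟩
  rw [mul_right_comm]
  exact Nat.find_spec hex _ (hj ▸ pow_succ m j ▸ Ideal.mul_mem_mul hb hx)

theorem eq_zero_of_forall_dual_mul_eq_zero {K : Type*} [Field K] [Algebra K A] (hm : m ^ N = ⊥)
    {s : A} (hsoc : ∀ c, (∀ x ∈ m, c * x = 0) → ∃ t : K, t • s = c)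
    {φ : Module.Dual K A} (hφ : φ s ≠ 0) {a : A} (ha : ∀ b, φ (b * a) = 0) : a = 0 := by
  by_contra ha0
  obtain ⟨b, hba, hsocle⟩ := exists_mul_ne_zero_forall_mem_mul_eq_zero hm ha0
  obtain ⟨t, ht⟩ := hsoc _ hsocle
  have htφ : t * φ s = 0 := by rw [← smul_eq_mul, ← map_smul, ht, ha]
  rcases mul_eq_zero.mp htφ with rfl | h
  · exact hba (by rw [← ht, zero_smul])
  · exact hφ h

theorem isNilpotent_of_forall_isMaximal_eq [IsArtinianRing A] (hm : m.IsMaximal)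
    (h : ∀ J : Ideal A, J.IsMaximal → J = m) : IsNilpotent m := by
  have hjac : (⊥ : Ideal A).jacobson = m :=
    le_antisymm (sInf_le ⟨bot_le, hm⟩) (le_sInf fun J hJ => (h J hJ.2).ge)
  exact hjac ▸ IsArtinianRing.isNilpotent_jacobson_bot

end SocleDuality

namespace Apolarity

variable {n : ℕ}

lemma D_X_pow_apply (i : Fin n) (b : ℕ) (F : MvPolynomial (Fin n) ℂ) :
    D n (X i ^ b) F = (pderiv i)^[b] F := by
  rw [map_pow, show D n (X i) = (pderiv i).toLinearMap from LinearMap.ext (D_X i),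
    Module.End.pow_apply]
  rfl

lemma D_monomial_one_monomial (d e : Fin n →₀ ℕ) (c : ℂ) :
    D n (monomial d 1) (monomial e c) =
      monomial (e - d) (c * ∏ i, ((e i).descFactorial (d i) : ℂ)) := by
  induction d using Finsupp.induction with
  | zero => simp
  | single_add i b f hif hb ih =>
    have hfi : f i = 0 := Finsupp.notMem_support_iff.mp hif
    have hsplit : monomial (Finsupp.single i b + f) (1 : ℂ) = X i ^ b * monomial f 1 := by
      rw [X_pow_eq_monomial, monomial_mul, one_mul]
    have hprod : ∏ j, ((e j).descFactorial ((Finsupp.single i b + f) j) : ℂ) =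
        ((e - f) i).descFactorial b * ∏ j, ((e j).descFactorial (f j) : ℂ) := by
      rw [Finsupp.tsub_apply, hfi, Nat.sub_zero, Fintype.prod_eq_mul_prod_compl i,
        Fintype.prod_eq_mul_prod_compl i fun j => ((e j).descFactorial (f j) : ℂ),
        Finset.prod_congr rfl fun j hj => by
          rw [Finsupp.add_apply, Finsupp.single_eq_of_ne (by simpa using hj), zero_add]]
      simp [hfi]
    rw [hsplit, map_mul, Module.End.mul_apply, ih, D_X_pow_apply, iterate_pderiv_monomial,
      tsub_tsub, add_comm f, hprod]
    congr 1
    ring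

def multiFactorial (d : Fin n →₀ ℕ) : ℂ := ∏ i, ((d i).factorial : ℂ)

lemma multiFactorial_ne_zero (d : Fin n →₀ ℕ) : multiFactorial d ≠ 0 :=
  Finset.prod_ne_zero_iff.mpr fun i _ => Nat.cast_ne_zero.mpr (d i).factorial_ne_zero

lemma constantCoeff_D_monomial_one (d : Fin n →₀ ℕ) (G : MvPolynomial (Fin n) ℂ) :
    constantCoeff (D n (monomial d 1) G) = multiFactorial d * coeff d G := by
  induction G using MvPolynomial.induction_on' with
  | monomial e c =>
    rw [D_monomial_one_monomial, constantCoeff_monomial, coeff_monomial]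
    rcases eq_or_ne e d with rfl | hed
    · simp only [tsub_self, Nat.descFactorial_self, multiFactorial, if_true]
      ring
    · rw [if_neg hed, mul_zero, ite_eq_right_iff]
      intro hle
      obtain ⟨i, hi⟩ : ∃ i, e i < d i := by
        by_contra! h
        exact hed (le_antisymm (tsub_eq_zero_iff_le.mp hle) (Finsupp.le_def.mpr h))
      rw [Finset.prod_eq_zero (Finset.mem_univ i) (by simp [hi]), mul_zero]
  | add p q hp hq => simp only [map_add, coeff_add, hp, hq, mul_add]

lemma eq_zero_of_forall_constantCoeff_D_monomial_one {G : MvPolynomial (Fin n) ℂ}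
    (h : ∀ d, constantCoeff (D n (monomial d 1) G) = 0) : G = 0 := by
  ext d
  simpa [constantCoeff_D_monomial_one, multiFactorial_ne_zero] using h d

theorem exists_constantCoeff_D_eq (L : MvPolynomial (Fin n) ℂ →ₗ[ℂ] ℂ)
    (s : Finset (Fin n →₀ ℕ)) (hL : ∀ d ∉ s, L (monomial d 1) = 0) :
    ∃ F, ∀ ρ, constantCoeff (D n ρ F) = L ρ := by
  refine ⟨∑ e ∈ s, (L (monomial e 1) / multiFactorial e) • monomial e 1, fun ρ => ?_⟩
  induction ρ using MvPolynomial.induction_on' with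
  | monomial d c =>
    rw [← mul_one c, ← smul_eq_mul, ← smul_monomial, map_smul, map_smul, LinearMap.smul_apply,
      smul_eq_C_mul, map_mul, constantCoeff_C, constantCoeff_D_monomial_one, coeff_sum]
    simp only [coeff_smul, coeff_monomial, smul_eq_mul, mul_ite, mul_one, mul_zero,
      Finset.sum_ite_eq']
    split_ifs with hd
    · rw [mul_div_cancel₀ _ (multiFactorial_ne_zero d)]
    · rw [hL d hd, mul_zero]
  | add p q hp hq => rw [map_add, LinearMap.add_apply, map_add, map_add, hp, hq]

theorem mem_annIdeal_iff_of_constantCoeff_D_eq {L : MvPolynomial (Fin n) ℂ →ₗ[ℂ] ℂ}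
    {F : MvPolynomial (Fin n) ℂ} (hF : ∀ ρ, constantCoeff (D n ρ F) = L ρ)
    (σ : MvPolynomial (Fin n) ℂ) : σ ∈ annIdeal F ↔ ∀ τ, L (τ * σ) = 0 := by
  have hLmul : ∀ τ, L (τ * σ) = constantCoeff (D n τ (D n σ F)) := by
    intro τ
    rw [← hF, map_mul, Module.End.mul_apply]
  change D n σ F = 0 ↔ _
  refine ⟨fun h τ => by rw [hLmul, h, map_zero, map_zero], fun h => ?_⟩
  exact eq_zero_of_forall_constantCoeff_D_monomial_one fun d => by rw [← hLmul, h]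

lemma X_pow_mem_of_mQuot_pow_eq_bot {I : Ideal (MvPolynomial (Fin n) ℂ)} {N : ℕ}
    (hN : mQuot I ^ N = ⊥) (i : Fin n) : X i ^ N ∈ I := by
  have hXi : Ideal.Quotient.mk I (X i) ^ N ∈ mQuot I ^ N :=
    Ideal.pow_mem_pow (Ideal.mem_map_of_mem _ (Ideal.subset_span (Set.mem_range_self i))) N
  rwa [hN, Ideal.mem_bot, ← map_pow, Ideal.Quotient.eq_zero_iff_mem] at hXi

/-- Macaulay's theorem, converse direction. If `I ⊆ S = ℂ[α₁,…,αₙ]` is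
an ideal such that `Q = S/I` is finite-dimensional over `ℂ`, `Q` is local with maximal
ideal the image `m` of `(α₁,…,αₙ)`, and the annihilator of `m` in `Q` is one-dimensional,
then `I = Ann(F)` for some polynomial `F ∈ ℂ[x₁,…,xₙ]`, i.e. `Q` is the apolar algebra
of `F`. -/
theorem exists_inverse_system_of_local_artinian_gorenstein
    {n : ℕ} (I : Ideal (MvPolynomial (Fin n) ℂ))
    (hfin : FiniteDimensional ℂ (MvPolynomial (Fin n) ℂ ⧸ I))
    (hmax : (mQuot I).IsMaximal)
    (hloc : ∀ J : Ideal (MvPolynomial (Fin n) ℂ ⧸ I), J.IsMaximal → J = mQuot I)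
    (hsoc : Module.finrank ℂ (socleQuot I) = 1) :
    ∃ F : MvPolynomial (Fin n) ℂ, I = annIdeal F := by
  have : IsArtinianRing (MvPolynomial (Fin n) ℂ ⧸ I) := isArtinian_of_tower ℂ inferInstance
  obtain ⟨N, hN⟩ := isNilpotent_of_forall_isMaximal_eq hmax hloc
  obtain ⟨s, hs0, hspan⟩ := finrank_eq_one_iff'.mp hsoc
  obtain ⟨φ, hφ⟩ := Module.Projective.exists_dual_ne_zero ℂ (x := (s : _ ⧸ I))
    (by simpa using hs0)
  set L := φ ∘ₗ (Ideal.Quotient.mkₐ ℂ I).toLinearMap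
  have hL : ∀ d ∉ Finset.Iic (Finsupp.equivFunOnFinite.symm fun _ => N), L (monomial d 1) = 0 := by
    intro d hd
    obtain ⟨i, hi⟩ : ∃ i, N < d i := by simpa [Finsupp.le_def] using hd
    have hdI := monomial_one_mem_of_X_pow_mem (X_pow_mem_of_mQuot_pow_eq_bot hN) hi.le
    simp [L, Ideal.Quotient.eq_zero_iff_mem.mpr hdI]
  obtain ⟨F, hF⟩ := exists_constantCoeff_D_eq L _ hL
  refine ⟨F, Ideal.ext fun σ => ?_⟩
  rw [mem_annIdeal_iff_of_constantCoeff_D_eq hF, ← Ideal.Quotient.eq_zero_iff_mem]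
  refine ⟨fun h τ => by simp [L, h], fun h => eq_zero_of_forall_dual_mul_eq_zero hN
    (fun c hc => ?_) hφ fun b => ?_⟩
  · obtain ⟨t, ht⟩ := hspan ⟨c, hc⟩
    exact ⟨t, congrArg Subtype.val ht⟩
  · obtain ⟨τ, rfl⟩ := Ideal.Quotient.mk_surjective b
    simpa [L] using h τ

end Apolarity
end
end

section
/- Let F ∈ ℂ[x₁,…,xₙ] be homogeneous of degree d and let I = Ann(F). Then for every 0 ≤ r ≤ d, the space S_r∘F (the image of the degree-r part of S acting on F) equals {G ∈ P homogeneous of degree d−r : σ∘G = 0 for all homogeneous σ ∈ I of degree d−r}, i.e., S_r∘F = (I_{d−r})^⊥. Consequently dim_ℂ(S_r∘F) = dim_ℂ(S_{d−r}∘F) for all r, i.e., the Hilbert function of the graded algebra Apolar(F) satisfies H(r) = H(d−r). -/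
noncomputable section

open MvPolynomial

namespace Apolarity

variable {n : ℕ}

/-! ### Auxiliary development for the apolarity theorem -/

open Finsupp in
private lemma degree_add' (a b : Fin n →₀ ℕ) :
    (a + b).degree = a.degree + b.degree := by
  simp [Finsupp.degree_eq_weight_one, map_add]

private lemma degree_single' (i : Fin n) (m : ℕ) :
    (Finsupp.single i m).degree = m := by
  classical
  rcases eq_or_ne m 0 with rfl | hm
  · simp [Finsupp.degree]
  · simp [Finsupp.degree_apply, Finsupp.support_single_ne_zero i hm]

lemma D_mul_apply (σ τ G : MvPolynomial (Fin n) ℂ) :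
    D n (σ * τ) G = D n σ (D n τ G) := by
  rw [map_mul]; rfl

lemma D_one_apply (G : MvPolynomial (Fin n) ℂ) : D n 1 G = G := by
  rw [map_one]; rfl

lemma D_C_apply (c : ℂ) (G : MvPolynomial (Fin n) ℂ) : D n (C c) G = c • G := by
  rw [← MvPolynomial.algebraMap_eq, (D n).commutes c, Module.algebraMap_end_apply]

/-- Action of a single-variable monomial operator on a monomial. -/
lemma D_single_monomial (j : Fin n) (m : ℕ) (b : Fin n →₀ ℕ) (c : ℂ) :
    D n (monomial (Finsupp.single j m) 1) (monomial b c) =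
      monomial (b - Finsupp.single j m) (((b j).descFactorial m : ℂ) * c) := by
  induction m with
  | zero =>
      rw [Finsupp.single_zero]
      have h1 : (monomial (0 : Fin n →₀ ℕ) (1 : ℂ)) = 1 := rfl
      rw [h1, D_one_apply]
      simp
  | succ m ih =>
      have hsplit : (monomial (Finsupp.single j (m + 1)) (1 : ℂ))
          = X j * monomial (Finsupp.single j m) 1 := by
        rw [show (X j : MvPolynomial (Fin n) ℂ) = monomial (Finsupp.single j 1) 1 from rfl,
          monomial_mul, one_mul, ← Finsupp.single_add, add_comm]
      rw [hsplit, D_mul_apply, ih,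
        show D n (X j) = ((MvPolynomial.pderiv j).toLinearMap :
          Module.End ℂ (MvPolynomial (Fin n) ℂ)) from LinearMap.ext fun F => D_X j F]
      show MvPolynomial.pderiv j _ = _
      rw [pderiv_monomial]
      have h1 : (b - Finsupp.single j m) j = b j - m := by
        rw [Finsupp.tsub_apply, Finsupp.single_eq_same]
      have h2 : b - Finsupp.single j m - Finsupp.single j 1
          = b - Finsupp.single j (m + 1) := by
        rw [tsub_tsub, ← Finsupp.single_add]
      rw [h1, h2]
      congr 1
      rw [Nat.descFactorial_succ]
      push_cast
      ring

/-- Action of a general monomial operator on a monomial. -/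
lemma D_monomial_monomial (a b : Fin n →₀ ℕ) (c : ℂ) :
    D n (monomial a 1) (monomial b c) =
      monomial (b - a) (((∏ i ∈ a.support, (b i).descFactorial (a i) : ℕ) : ℂ) * c) := by
  classical
  induction a using Finsupp.induction with
  | zero =>
      have h1 : (monomial (0 : Fin n →₀ ℕ) (1 : ℂ)) = 1 := rfl
      rw [h1, D_one_apply]
      simp
  | single_add j m f hjf hm ih =>
      have hsplit : (monomial (Finsupp.single j m + f) (1 : ℂ))
          = monomial (Finsupp.single j m) 1 * monomial f 1 := by
        rw [monomial_mul, one_mul]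
      rw [hsplit, D_mul_apply, ih, D_single_monomial]
      have hfj : f j = 0 := Finsupp.notMem_support_iff.1 hjf
      have h1 : (b - f) j = b j := by
        rw [Finsupp.tsub_apply, hfj, Nat.sub_zero]
      have h2 : b - f - Finsupp.single j m = b - (Finsupp.single j m + f) := by
        rw [tsub_tsub, add_comm]
      have hsupp : (Finsupp.single j m + f).support = insert j f.support := by
        rw [Finsupp.support_add_eq, Finsupp.support_single_ne_zero j hm]
        · exact (Finset.insert_eq j f.support).symm
        · rw [Finsupp.support_single_ne_zero j hm]
          simpa using hjf
      have hprod : (∏ i ∈ (Finsupp.single j m + f).support,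
          (b i).descFactorial ((Finsupp.single j m + f) i))
          = (b j).descFactorial m * ∏ i ∈ f.support, (b i).descFactorial (f i) := by
        rw [hsupp, Finset.prod_insert hjf]
        congr 1
        · rw [Finsupp.add_apply, Finsupp.single_eq_same, hfj, Nat.add_zero]
        · refine Finset.prod_congr rfl fun i hi => ?_
          have hij : i ≠ j := by rintro rfl; exact hjf hi
          rw [Finsupp.add_apply, Finsupp.single_eq_of_ne hij, Nat.zero_add]
      rw [h1, h2, hprod]
      push_cast
      ring

lemma coeff_zero_D_monomial (a : Fin n →₀ ℕ) (G : MvPolynomial (Fin n) ℂ) :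
    coeff 0 (D n (monomial a 1) G) =
      ((∏ i ∈ a.support, Nat.factorial (a i) : ℕ) : ℂ) * coeff a G := by
  classical
  induction G using MvPolynomial.induction_on' with
  | monomial b c =>
      rw [D_monomial_monomial, coeff_monomial, coeff_monomial]
      by_cases hba : b = a
      · subst hba
        rw [if_pos rfl, if_pos (tsub_self b)]
        congr 2
        exact Finset.prod_congr rfl fun i _ => Nat.descFactorial_self (b i)
      · rw [if_neg hba, mul_zero]
        by_cases h0 : b - a = 0
        · rw [if_pos h0]
          have hle : ∀ i, b i ≤ a i := fun i =>
            Nat.le_of_sub_eq_zero (by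
              have h := DFunLike.ext_iff.1 h0 i
              simpa [Finsupp.tsub_apply] using h)
          obtain ⟨i, hi⟩ : ∃ i, b i < a i := by
            by_contra hc
            push_neg at hc
            exact hba (Finsupp.ext fun i => le_antisymm (hle i) (hc i))
          have hmem : i ∈ a.support := Finsupp.mem_support_iff.2 (by omega)
          have hz : (∏ j ∈ a.support, (b j).descFactorial (a j)) = 0 :=
            Finset.prod_eq_zero hmem (Nat.descFactorial_eq_zero_iff_lt.2 hi)
          rw [hz, Nat.cast_zero, zero_mul]
        · rw [if_neg h0]
  | add p q hp hq =>
      rw [map_add, coeff_add, hp, hq, coeff_add, mul_add]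

lemma coeff_zero_D_apply_monomial (σ : MvPolynomial (Fin n) ℂ) (b : Fin n →₀ ℕ) (c : ℂ) :
    coeff 0 (D n σ (monomial b c)) =
      c * (((∏ i ∈ b.support, Nat.factorial (b i) : ℕ) : ℂ) * coeff b σ) := by
  classical
  induction σ using MvPolynomial.induction_on' with
  | monomial a e =>
      have h : (monomial a e : MvPolynomial (Fin n) ℂ) = e • monomial a 1 := by
        rw [MvPolynomial.smul_monomial, smul_eq_mul, mul_one]
      rw [h, map_smul, LinearMap.smul_apply, MvPolynomial.coeff_smul,
        coeff_zero_D_monomial, coeff_monomial]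
      rw [MvPolynomial.coeff_smul, coeff_monomial]
      by_cases hab : a = b
      · subst hab
        rw [if_pos rfl, if_pos rfl]
        simp only [smul_eq_mul]
        ring
      · rw [if_neg (fun h' => hab h'.symm), if_neg hab]
        simp
  | add p q hp hq =>
      rw [map_add, LinearMap.add_apply, coeff_add, hp, hq, coeff_add]
      ring

private lemma prod_factorial_ne_zero (b : Fin n →₀ ℕ) :
    ((∏ i ∈ b.support, Nat.factorial (b i) : ℕ) : ℂ) ≠ 0 := by
  rw [Nat.cast_ne_zero]
  exact Finset.prod_ne_zero_iff.2 fun i _ => (Nat.factorial_pos (b i)).ne'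

/-- Right nondegeneracy of the apolarity pairing in degree `k`. -/
lemma right_nondeg {k : ℕ} {G : MvPolynomial (Fin n) ℂ} (hG : G.IsHomogeneous k)
    (h : ∀ σ : MvPolynomial (Fin n) ℂ, σ.IsHomogeneous k → coeff 0 (D n σ G) = 0) :
    G = 0 := by
  ext b
  rw [coeff_zero]
  by_cases hb : b.degree = k
  · have h1 := h (monomial b 1) (isHomogeneous_monomial 1 hb)
    rw [coeff_zero_D_monomial] at h1
    exact (mul_eq_zero.1 h1).resolve_left (prod_factorial_ne_zero b)
  · exact hG.coeff_eq_zero hb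

/-- Left nondegeneracy of the apolarity pairing in degree `k`. -/
lemma left_nondeg {k : ℕ} {σ : MvPolynomial (Fin n) ℂ} (hσ : σ.IsHomogeneous k)
    (h : ∀ G : MvPolynomial (Fin n) ℂ, G.IsHomogeneous k → coeff 0 (D n σ G) = 0) :
    σ = 0 := by
  ext b
  rw [coeff_zero]
  by_cases hb : b.degree = k
  · have h1 := h (monomial b 1) (isHomogeneous_monomial 1 hb)
    rw [coeff_zero_D_apply_monomial, one_mul] at h1
    exact (mul_eq_zero.1 h1).resolve_left (prod_factorial_ne_zero b)
  · exact hσ.coeff_eq_zero hb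

/-- `pderiv` lowers the degree of a homogeneous polynomial by one. -/
lemma isHomogeneous_pderiv {m : ℕ} {p : MvPolynomial (Fin n) ℂ} (i : Fin n)
    (hp : p.IsHomogeneous m) : (MvPolynomial.pderiv i p).IsHomogeneous (m - 1) := by
  classical
  rw [MvPolynomial.as_sum p, map_sum]
  apply MvPolynomial.IsHomogeneous.sum
  intro b hb
  rw [pderiv_monomial]
  by_cases hbi : b i = 0
  · rw [hbi, Nat.cast_zero, mul_zero, map_zero]
    exact isHomogeneous_zero _ _ _
  · apply isHomogeneous_monomial
    have hdeg : b.degree = m := by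
      by_contra hc
      exact (MvPolynomial.mem_support_iff.1 hb) (hp.coeff_eq_zero hc)
    have hle : Finsupp.single i 1 ≤ b := Finsupp.single_le_iff.2 (Nat.one_le_iff_ne_zero.2 hbi)
    have hsum : (b - Finsupp.single i 1) + Finsupp.single i 1 = b := tsub_add_cancel_of_le hle
    have := congrArg Finsupp.degree hsum
    rw [degree_add', degree_single'] at this
    omega

lemma isHomog_D_single (j : Fin n) (m : ℕ) {M : ℕ} {p : MvPolynomial (Fin n) ℂ}
    (hp : p.IsHomogeneous M) :
    (D n (monomial (Finsupp.single j m) 1) p).IsHomogeneous (M - m) := by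
  induction m with
  | zero =>
      rw [Finsupp.single_zero, show (monomial (0 : Fin n →₀ ℕ) (1 : ℂ)) = 1 from rfl,
        D_one_apply]
      simpa using hp
  | succ m ih =>
      have hsplit : (monomial (Finsupp.single j (m + 1)) (1 : ℂ))
          = X j * monomial (Finsupp.single j m) 1 := by
        rw [show (X j : MvPolynomial (Fin n) ℂ) = monomial (Finsupp.single j 1) 1 from rfl,
          monomial_mul, one_mul, ← Finsupp.single_add, add_comm]
      rw [hsplit, D_mul_apply]
      have h := isHomogeneous_pderiv j ih
      rw [Nat.sub_sub] at h
      rw [show D n (X j) (D n (monomial (Finsupp.single j m) 1) p)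
        = MvPolynomial.pderiv j (D n (monomial (Finsupp.single j m) 1) p) from D_X j _]
      exact h

lemma isHomog_D_monomial (a : Fin n →₀ ℕ) (c : ℂ) {M : ℕ} {p : MvPolynomial (Fin n) ℂ}
    (hp : p.IsHomogeneous M) :
    (D n (monomial a c) p).IsHomogeneous (M - a.degree) := by
  classical
  induction a using Finsupp.induction with
  | zero =>
      rw [show (monomial (0 : Fin n →₀ ℕ) c : MvPolynomial (Fin n) ℂ) = C c from rfl,
        D_C_apply, map_zero, Nat.sub_zero]
      exact (homogeneousSubmodule (Fin n) ℂ M).smul_mem c hp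
  | single_add j m f hjf hm ih =>
      have hsplit : (monomial (Finsupp.single j m + f) c : MvPolynomial (Fin n) ℂ)
          = monomial (Finsupp.single j m) 1 * monomial f c := by
        rw [monomial_mul, one_mul]
      rw [hsplit, D_mul_apply, degree_add', degree_single']
      have h := isHomog_D_single j m ih
      rwa [Nat.sub_sub, add_comm f.degree m] at h

/-- If `σ` is homogeneous of degree `r` and `G` of degree `m` then `σ∘G` is homogeneous
of degree `m - r`. -/
lemma isHomogeneous_D {r m : ℕ} {σ G : MvPolynomial (Fin n) ℂ}
    (hσ : σ.IsHomogeneous r) (hG : G.IsHomogeneous m) :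
    (D n σ G).IsHomogeneous (m - r) := by
  classical
  rw [MvPolynomial.as_sum σ, map_sum, LinearMap.sum_apply]
  apply MvPolynomial.IsHomogeneous.sum
  intro a ha
  have hdeg : a.degree = r := by
    by_contra hc
    exact (MvPolynomial.mem_support_iff.1 ha) (hσ.coeff_eq_zero hc)
  have := isHomog_D_monomial a (coeff a σ) hG
  rwa [hdeg] at this

lemma eq_zero_of_isHomogeneous_zero {p : MvPolynomial (Fin n) ℂ}
    (hp : p.IsHomogeneous 0) (h0 : coeff 0 p = 0) : p = 0 := by
  ext b
  rw [coeff_zero]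
  rcases eq_or_ne b 0 with rfl | hb
  · exact h0
  · exact hp.coeff_eq_zero (by rwa [ne_eq, Finsupp.degree_eq_zero_iff])

instance homogeneousSubmodule_finiteDimensional (k : ℕ) :
    FiniteDimensional ℂ (homogeneousSubmodule (Fin n) ℂ k) :=
  Submodule.finiteDimensional_of_le (S₂ := restrictTotalDegree (Fin n) ℂ k)
    fun p hp => by
      rw [mem_restrictTotalDegree]
      exact MvPolynomial.IsHomogeneous.totalDegree_le hp


lemma applyAt_apply (F σ : MvPolynomial (Fin n) ℂ) : applyAt F σ = D n σ F := rfl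

lemma mem_annIdeal_iff {F σ : MvPolynomial (Fin n) ℂ} :
    σ ∈ annIdeal F ↔ D n σ F = 0 := Iff.rfl

/-- Dimension of a "perp" subspace w.r.t. a bilinear form whose right kernel is trivial. -/
lemma perp_finrank_add {K V : Type*} [Field K] [AddCommGroup V] [Module K V]
    [FiniteDimensional K V] (B : V →ₗ[K] V →ₗ[K] K)
    (hB : ∀ v : V, (∀ u : V, B u v = 0) → v = 0) (U : Submodule K V) :
    Module.finrank K ↥(⨅ u : U, LinearMap.ker (B u)) + Module.finrank K U
      = Module.finrank K V := by
  have hinj : Function.Injective B.flip := by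
    rw [← LinearMap.ker_eq_bot]
    refine (Submodule.eq_bot_iff _).2 fun v hv => hB v fun u => ?_
    have := LinearMap.congr_fun (LinearMap.mem_ker.1 hv) u
    simpa using this
  have hsurj : Function.Surjective B.flip := by
    rw [← LinearMap.range_eq_top]
    refine Submodule.eq_top_of_finrank_eq ?_
    rw [LinearMap.finrank_range_of_inj hinj, Subspace.dual_finrank_eq]
  let e : V ≃ₗ[K] Module.Dual K V := LinearEquiv.ofBijective B.flip ⟨hinj, hsurj⟩
  have hperp : (⨅ u : U, LinearMap.ker (B u))
      = Submodule.comap (e : V →ₗ[K] Module.Dual K V) U.dualAnnihilator := by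
    ext v
    simp only [Submodule.mem_iInf, LinearMap.mem_ker, Submodule.mem_comap,
      Submodule.mem_dualAnnihilator]
    constructor
    · intro h w hw
      exact h ⟨w, hw⟩
    · intro h u
      exact h ↑u u.2
  rw [hperp, Submodule.comap_equiv_eq_map_symm, LinearEquiv.finrank_map_eq]
  have h2 : Module.finrank K ↥U.dualAnnihilator = Module.finrank K (V ⧸ U) :=
    ((Subspace.quotEquivAnnihilator U).finrank_eq).symm
  rw [h2]
  exact Submodule.finrank_quotient_add_finrank U

/-- The apolarity pairing `⟨σ, G⟩ = (σ∘G)(0)`. -/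
def Bpair (n : ℕ) :
    MvPolynomial (Fin n) ℂ →ₗ[ℂ] MvPolynomial (Fin n) ℂ →ₗ[ℂ] ℂ :=
  LinearMap.mk₂ ℂ (fun σ G => coeff 0 (D n σ G))
    (fun σ₁ σ₂ G => by simp only [map_add, LinearMap.add_apply, coeff_add])
    (fun c σ G => by
      simp only [map_smul, LinearMap.smul_apply, MvPolynomial.coeff_smul, smul_eq_mul])
    (fun σ G₁ G₂ => by simp only [map_add, coeff_add])
    (fun c σ G => by simp only [map_smul, MvPolynomial.coeff_smul, smul_eq_mul])

lemma Bpair_apply (σ G : MvPolynomial (Fin n) ℂ) :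
    Bpair n σ G = coeff 0 (D n σ G) := rfl

/-- Rank–nullity for the map `σ ↦ σ∘F` on `S_m`. -/
lemma srf_finrank_add (F : MvPolynomial (Fin n) ℂ) (m : ℕ) :
    Module.finrank ℂ (SrF m F) +
      Module.finrank ℂ ↥(((annIdeal F).restrictScalars ℂ).comap
        (homogeneousSubmodule (Fin n) ℂ m).subtype)
      = Module.finrank ℂ (homogeneousSubmodule (Fin n) ℂ m) := by
  set f : ↥(homogeneousSubmodule (Fin n) ℂ m) →ₗ[ℂ] MvPolynomial (Fin n) ℂ :=
    (applyAt F) ∘ₗ (homogeneousSubmodule (Fin n) ℂ m).subtype with hf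
  have hrange : LinearMap.range f = SrF m F := by
    rw [hf, LinearMap.range_comp, Submodule.range_subtype]
    rfl
  have hker : LinearMap.ker f = ((annIdeal F).restrictScalars ℂ).comap
      (homogeneousSubmodule (Fin n) ℂ m).subtype := by
    ext σ
    simp only [LinearMap.mem_ker, Submodule.mem_comap, Submodule.restrictScalars_mem, hf,
      LinearMap.comp_apply, mem_annIdeal_iff, applyAt_apply]
  have h := LinearMap.finrank_range_add_finrank_ker f
  rw [hrange, hker] at h
  exact h

/-- The main duality lemma. -/
lemma key (F : MvPolynomial (Fin n) ℂ) {d : ℕ} (hF : F.IsHomogeneous d)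
    {r : ℕ} (hr : r ≤ d) :
    SrF r F =
      (MvPolynomial.homogeneousSubmodule (Fin n) ℂ (d - r)) ⊓
        (⨅ σ ∈ {σ : MvPolynomial (Fin n) ℂ |
            σ ∈ annIdeal F ∧ σ.IsHomogeneous (d - r)}, LinearMap.ker (D n σ)) ∧
    Module.finrank ℂ (SrF r F) +
      Module.finrank ℂ ↥(((annIdeal F).restrictScalars ℂ).comap
        (homogeneousSubmodule (Fin n) ℂ (d - r)).subtype)
      = Module.finrank ℂ (homogeneousSubmodule (Fin n) ℂ (d - r)) := by
  classical
  set k := d - r with hk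
  set V := homogeneousSubmodule (Fin n) ℂ k with hV
  set RHS := (homogeneousSubmodule (Fin n) ℂ k) ⊓
        (⨅ σ ∈ {σ : MvPolynomial (Fin n) ℂ |
            σ ∈ annIdeal F ∧ σ.IsHomogeneous k}, LinearMap.ker (D n σ)) with hRHS
  have hdk : d - k = r := Nat.sub_sub_self hr
  have hWle : SrF r F ≤ V := by
    rintro G hG
    obtain ⟨σ, hσ, rfl⟩ := Submodule.mem_map.1 hG
    rw [mem_homogeneousSubmodule] at hσ
    rw [mem_homogeneousSubmodule, applyAt_apply]
    exact isHomogeneous_D hσ hF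
  have hmul_ann : ∀ {τ σ : MvPolynomial (Fin n) ℂ}, τ ∈ annIdeal F →
      D n τ (D n σ F) = 0 := by
    intro τ σ hτ
    rw [← D_mul_apply, mul_comm, D_mul_apply, mem_annIdeal_iff.1 hτ, map_zero]
  have hWle2 : SrF r F ≤ RHS := by
    refine le_inf hWle ?_
    rintro G hG
    obtain ⟨σ, hσ, rfl⟩ := Submodule.mem_map.1 hG
    simp only [Submodule.mem_iInf, LinearMap.mem_ker, Set.mem_setOf_eq, applyAt_apply]
    rintro τ ⟨hτI, -⟩
    exact hmul_ann hτI
  set Bk : V →ₗ[ℂ] V →ₗ[ℂ] ℂ := (Bpair n).compl₁₂ V.subtype V.subtype with hBk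
  have hBk_apply : ∀ u v : V, Bk u v = coeff 0 (D n ↑u ↑v) := by
    intro u v
    rw [hBk, LinearMap.compl₁₂_apply, Bpair_apply]
    rfl
  have hmemV : ∀ {p : MvPolynomial (Fin n) ℂ}, p ∈ V ↔ p.IsHomogeneous k := by
    intro p
    rw [hV, mem_homogeneousSubmodule]
  have hBk_right : ∀ v : V, (∀ u : V, Bk u v = 0) → v = 0 := by
    intro v hv
    refine Subtype.ext (right_nondeg (hmemV.1 v.2) fun σ hσ => ?_)
    have h := hv ⟨σ, hmemV.2 hσ⟩
    rwa [hBk_apply] at h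
  have hBk_left : ∀ v : V, (∀ u : V, Bk.flip u v = 0) → v = 0 := by
    intro v hv
    refine Subtype.ext (left_nondeg (hmemV.1 v.2) fun G hG => ?_)
    have h := hv ⟨G, hmemV.2 hG⟩
    rwa [LinearMap.flip_apply, hBk_apply] at h
  set U : Submodule ℂ V := ((annIdeal F).restrictScalars ℂ).comap V.subtype with hU
  have hmemU : ∀ {τ : V}, τ ∈ U ↔ D n ↑τ F = 0 := by
    intro τ
    rw [hU, Submodule.mem_comap, Submodule.restrictScalars_mem, mem_annIdeal_iff]
    rfl
  set T : Submodule ℂ V := (SrF r F).comap V.subtype with hT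
  have hTperp : (⨅ w : T, LinearMap.ker (Bk.flip ↑w)) = U := by
    ext τ
    simp only [Submodule.mem_iInf, LinearMap.mem_ker, LinearMap.flip_apply, hBk_apply]
    rw [hmemU]
    constructor
    · intro h
      have hτG : (D n (↑τ : MvPolynomial (Fin n) ℂ) F).IsHomogeneous r := by
        have := isHomogeneous_D (hmemV.1 τ.2) hF
        rwa [hdk] at this
      apply right_nondeg hτG
      intro σ hσ
      have hw : applyAt F σ ∈ SrF r F :=
        Submodule.mem_map.2 ⟨σ, (mem_homogeneousSubmodule r σ).2 hσ, rfl⟩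
      have hwT : (⟨applyAt F σ, hWle hw⟩ : V) ∈ T := by
        rw [hT, Submodule.mem_comap]
        exact hw
      have h0 : coeff 0 (D n (↑τ : MvPolynomial (Fin n) ℂ) (applyAt F σ)) = 0 :=
        h ⟨⟨applyAt F σ, hWle hw⟩, hwT⟩
      rw [applyAt_apply] at h0
      rw [← D_mul_apply, mul_comm σ (↑τ : MvPolynomial (Fin n) ℂ), D_mul_apply]
      exact h0
    · intro hτ w
      obtain ⟨σ, hσ, hw⟩ := Submodule.mem_map.1 (Submodule.mem_comap.1 w.2)
      rw [Submodule.subtype_apply] at hw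
      rw [← hw, applyAt_apply,
        show D n (↑τ : MvPolynomial (Fin n) ℂ) (D n σ F) = 0 from hmul_ann (mem_annIdeal_iff.2 hτ),
        coeff_zero]
  have hUperp : (⨅ u : U, LinearMap.ker (Bk ↑u)) = RHS.comap V.subtype := by
    ext G
    simp only [Submodule.mem_iInf, LinearMap.mem_ker, Submodule.mem_comap, hRHS,
      Submodule.mem_inf, Set.mem_setOf_eq, hBk_apply]
    constructor
    · intro h
      refine ⟨G.2, ?_⟩
      rintro σ ⟨hσI, hσh⟩
      have h0 : coeff 0 (D n σ ↑G) = 0 := h ⟨⟨σ, hmemV.2 hσh⟩, hmemU.2 (mem_annIdeal_iff.1 hσI)⟩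
      have hhom : (D n σ (↑G : MvPolynomial (Fin n) ℂ)).IsHomogeneous 0 := by
        have := isHomogeneous_D hσh (hmemV.1 G.2)
        rwa [Nat.sub_self] at this
      exact eq_zero_of_isHomogeneous_zero hhom h0
    · rintro ⟨-, h⟩ u
      have hz := h ↑u ⟨mem_annIdeal_iff.2 (hmemU.1 u.2), hmemV.1 (↑u : V).2⟩
      rw [Submodule.subtype_apply] at hz
      rw [hz, coeff_zero]
  have e1 := perp_finrank_add Bk.flip hBk_left T
  rw [hTperp] at e1
  have e2 := perp_finrank_add Bk hBk_right U
  rw [hUperp] at e2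
  have hT_eq : Module.finrank ℂ T = Module.finrank ℂ (SrF r F) :=
    LinearEquiv.finrank_eq (Submodule.comapSubtypeEquivOfLe hWle)
  have hRHSle : RHS ≤ V := inf_le_left
  have hRHS_eq : Module.finrank ℂ (RHS.comap V.subtype) = Module.finrank ℂ RHS :=
    LinearEquiv.finrank_eq (Submodule.comapSubtypeEquivOfLe hRHSle)
  haveI : FiniteDimensional ℂ RHS := Submodule.finiteDimensional_of_le hRHSle
  have hfr : Module.finrank ℂ RHS = Module.finrank ℂ (SrF r F) := by omega
  refine ⟨Submodule.eq_of_le_of_finrank_le hWle2 hfr.le, ?_⟩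
  omega

/-- Let `F ∈ ℂ[x₁,…,xₙ]` be homogeneous of degree `d` and `I = Ann(F)`.
For every `0 ≤ r ≤ d` the space `S_r∘F` equals `(I_{d−r})^⊥`, the space of homogeneous
polynomials `G` of degree `d−r` annihilated by every homogeneous `σ ∈ I` of degree `d−r`.
Consequently `dim_ℂ (S_r∘F) = dim_ℂ (S_{d−r}∘F)`, i.e. the Hilbert function of the graded
algebra `Apolar(F)` satisfies `H(r) = H(d−r)`. -/
theorem srf_eq_perp_and_hilbert_symmetry
    {n : ℕ} {d : ℕ} (F : MvPolynomial (Fin n) ℂ) (hF : F.IsHomogeneous d) :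
    ∀ r : ℕ, r ≤ d →
      SrF r F =
        (MvPolynomial.homogeneousSubmodule (Fin n) ℂ (d - r)) ⊓
          (⨅ σ ∈ {σ : MvPolynomial (Fin n) ℂ |
              σ ∈ annIdeal F ∧ σ.IsHomogeneous (d - r)}, LinearMap.ker (D n σ)) ∧
      Module.finrank ℂ (SrF r F) = Module.finrank ℂ (SrF (d - r) F) := by
  intro r hr
  obtain ⟨h1, h2⟩ := key F hF hr
  refine ⟨h1, ?_⟩
  have h3 := srf_finrank_add F (d - r)
  omega

end Apolarity
end
end

section
/- Let A be a commutative Noetherian ring and I ⊆ S_A = A[α₁,…,αₙ] an ideal such that B = S_A/I is finitely generated as an A-module, and suppose that for every prime p of A with residue field κ(p) the image of each αᵢ in B ⊗_A κ(p) is nilpotent. Then the image of each αᵢ in B is nilpotent; in particular there exists N such that (α₁,…,αₙ)^N ⊆ I, and consequently every F ∈ P_A with I ⊆ Ann(F) is a polynomial, i.e., F lies in the image of A[x₁,…,xₙ] in P_A. -/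
noncomputable section

open MvPolynomial TensorProduct

namespace RelativeApolarity

variable {A : Type*} [CommRing A] {n : ℕ}

/-- The precomposition action of `σ ∈ S_A` on `f ∈ P_A = Hom_A(S_A, A)`:
`(σ·f)(τ) = f(στ)`. -/
def pact (σ : MvPolynomial (Fin n) A) (f : Module.Dual A (MvPolynomial (Fin n) A)) :
    Module.Dual A (MvPolynomial (Fin n) A) :=
  f ∘ₗ LinearMap.mulLeft A σ

lemma pact_apply (σ τ : MvPolynomial (Fin n) A) (f : Module.Dual A (MvPolynomial (Fin n) A)) :
    pact σ f τ = f (σ * τ) := rfl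

lemma pact_zero (f : Module.Dual A (MvPolynomial (Fin n) A)) : pact 0 f = 0 := by
  apply LinearMap.ext; intro ρ
  show f (0 * ρ) = 0
  rw [zero_mul, map_zero]

lemma pact_add (σ τ : MvPolynomial (Fin n) A) (f : Module.Dual A (MvPolynomial (Fin n) A)) :
    pact (σ + τ) f = pact σ f + pact τ f := by
  apply LinearMap.ext; intro ρ
  show f ((σ + τ) * ρ) = f (σ * ρ) + f (τ * ρ)
  rw [add_mul, map_add]

lemma pact_smul (a : A) (σ : MvPolynomial (Fin n) A)
    (f : Module.Dual A (MvPolynomial (Fin n) A)) :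
    pact (a • σ) f = a • pact σ f := by
  apply LinearMap.ext; intro ρ
  show f ((a • σ) * ρ) = a • f (σ * ρ)
  rw [smul_mul_assoc, map_smul]

lemma pact_mul (σ τ : MvPolynomial (Fin n) A) (f : Module.Dual A (MvPolynomial (Fin n) A)) :
    pact (σ * τ) f = pact σ (pact τ f) := by
  apply LinearMap.ext; intro ρ
  show f (σ * τ * ρ) = f (τ * (σ * ρ))
  exact congrArg f (by ring)

/-- The apolar ideal `Ann(F) = {σ ∈ S_A : σ·F = 0}`. -/
def annRel (F : Module.Dual A (MvPolynomial (Fin n) A)) : Ideal (MvPolynomial (Fin n) A) where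
  carrier := {σ | pact σ F = 0}
  zero_mem' := pact_zero F
  add_mem' := by
    intro a b ha hb
    show pact (a + b) F = 0
    rw [pact_add, ha, hb, add_zero]
  smul_mem' := by
    intro c x hx
    show pact (c • x) F = 0
    rw [smul_eq_mul, pact_mul, hx]
    show (0 : Module.Dual A (MvPolynomial (Fin n) A)) ∘ₗ _ = 0
    exact LinearMap.zero_comp _

/-- The `A`-linear map `σ ↦ σ·F`. -/
def actMap (F : Module.Dual A (MvPolynomial (Fin n) A)) :
    MvPolynomial (Fin n) A →ₗ[A] Module.Dual A (MvPolynomial (Fin n) A) where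
  toFun σ := pact σ F
  map_add' σ τ := pact_add σ τ F
  map_smul' a σ := pact_smul a σ F

/-- The `A`-submodule `S_A·F ⊆ P_A`. -/
def SAF (F : Module.Dual A (MvPolynomial (Fin n) A)) :
    Submodule A (Module.Dual A (MvPolynomial (Fin n) A)) :=
  LinearMap.range (actMap F)

/-- The embedding `A[x₁,…,xₙ] ↪ P_A` sending the monomial `x^b` to the functional taking
`α^a` to `1` if `a = b` and to `0` otherwise. -/
def polyToDual : MvPolynomial (Fin n) A →ₗ[A] Module.Dual A (MvPolynomial (Fin n) A) :=
  (MvPolynomial.basisMonomials (Fin n) A).toDual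

/-- Base change `P_A → P_B` of functionals: `F_B` is the `B`-linear extension of
`φ ∘ F`, i.e. the functional with `F_B(α^m) = φ(F(α^m))`. -/
def dualBC (B : Type*) [CommRing B] [Algebra A B] :
    Module.Dual A (MvPolynomial (Fin n) A) →ₗ[A] Module.Dual B (MvPolynomial (Fin n) B) :=
  ((((MvPolynomial.basisMonomials (Fin n) B).constr A).toLinearMap).comp
    ((LinearMap.compLeft (Algebra.linearMap A B) ((Fin n) →₀ ℕ)).comp
      (LinearMap.pi fun m : (Fin n) →₀ ℕ =>
        LinearMap.applyₗ (MvPolynomial.monomial m (1 : A)))))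

/-- The residue field `κ(p)` of a prime `p`, i.e. the residue field of the local ring
`A_p`. -/
def resField {A : Type*} [CommRing A] (p : PrimeSpectrum A) : Type _ :=
  IsLocalRing.ResidueField (Localization.AtPrime p.asIdeal)

noncomputable instance {A : Type*} [CommRing A] (p : PrimeSpectrum A) :
    Field (resField p) :=
  inferInstanceAs (Field (IsLocalRing.ResidueField (Localization.AtPrime p.asIdeal)))

/-- The canonical map `A → κ(p)` as an algebra structure. -/
noncomputable instance {A : Type*} [CommRing A] (p : PrimeSpectrum A) :
    Algebra A (resField p) :=
  ((algebraMap (Localization.AtPrime p.asIdeal)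
      (IsLocalRing.ResidueField (Localization.AtPrime p.asIdeal))).comp
    (algebraMap A (Localization.AtPrime p.asIdeal))).toAlgebra


set_option synthInstance.maxHeartbeats 1000000 in
open IsLocalRing in
lemma aux_mem_prime
    {A : Type*} [CommRing A] {n : ℕ}
    (I : Ideal (MvPolynomial (Fin n) A))
    (hnil : ∀ (p : PrimeSpectrum A) (i : Fin n),
      IsNilpotent
        ((Ideal.Quotient.mk I (X i)) ⊗ₜ[A] (1 : resField p) :
          (MvPolynomial (Fin n) A ⧸ I) ⊗[A] resField p))
    (i : Fin n) : IsNilpotent (Ideal.Quotient.mk I (X i)) := by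
  rw [nilpotent_iff_mem_prime]
  intro q hq
  set B := MvPolynomial (Fin n) A ⧸ I
  set b : B := Ideal.Quotient.mk I (X i) with hb
  set p' : Ideal A := q.comap (algebraMap A B) with hp'
  haveI : p'.IsPrime := Ideal.IsPrime.comap _
  set p : PrimeSpectrum A := ⟨p', inferInstance⟩ with hp
  set Lq := Localization.AtPrime q with hLq
  set κq := ResidueField Lq with hκq
  set g2 : B →+* κq := (residue Lq).comp (algebraMap B Lq) with hg2
  letI : Algebra A κq := (g2.comp (algebraMap A B)).toAlgebra
  set loc : Localization.AtPrime p' →+* Lq :=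
    Localization.localRingHom p' q (algebraMap A B) rfl with hloc
  haveI : IsLocalHom loc := Localization.isLocalHom_localRingHom p' q _ rfl
  set g1 : resField p →+* κq := ResidueField.map loc with hg1
  have hcomm : ∀ a : A, g1 (algebraMap A (resField p) a) = algebraMap A κq a := by
    intro a
    have e1 : g1 (algebraMap A (resField p) a)
        = residue Lq (loc (algebraMap A (Localization.AtPrime p') a)) :=
      rfl
    rw [e1, hloc, Localization.localRingHom_to_map]
    rfl
  let g2a : B →ₐ[A] κq := { g2 with commutes' := fun a => rfl }
  let g1a : resField p →ₐ[A] κq := { g1 with commutes' := hcomm }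
  let Φ : B ⊗[A] resField p →ₐ[A] κq := Algebra.TensorProduct.productMap g2a g1a
  have hnb : IsNilpotent (Φ (b ⊗ₜ[A] (1 : resField p))) := by
    obtain ⟨k, hk⟩ := hnil p i
    exact ⟨k, by have := congrArg Φ.toRingHom hk; rw [map_pow, map_zero] at this; exact this⟩
  have hΦ : Φ (b ⊗ₜ[A] (1 : resField p)) = g2 b := by
    rw [Algebra.TensorProduct.productMap_apply_tmul]
    simp [g1a, g2a]
  rw [hΦ] at hnb
  have h0 : g2 b = 0 := hnb.eq_zero
  have : algebraMap B Lq b ∈ maximalIdeal Lq := by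
    refine (residue_eq_zero_iff (R := Lq) _).mp ?_
    exact h0
  exact (IsLocalization.AtPrime.to_map_mem_maximal_iff Lq q b).mp this

lemma aux_monomial_mem
    {A : Type*} [CommRing A] {n : ℕ} (m : Fin n →₀ ℕ) :
    monomial m (1 : A) ∈
      (Ideal.span (Set.range (X : Fin n → MvPolynomial (Fin n) A))) ^ (m.sum fun _ e => e) := by
  induction m using Finsupp.induction with
  | zero => simp
  | single_add a k f ha hk ih =>
    have hsum : ((Finsupp.single a k + f).sum fun _ e => e) = k + (f.sum fun _ e => e) := by
      rw [Finsupp.sum_add_index' (fun _ => rfl) (fun _ _ _ => rfl)]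
      simp
    have hmon : monomial (Finsupp.single a k + f) (1 : A)
        = (X a) ^ k * monomial f 1 := by
      rw [X_pow_eq_monomial, monomial_mul, one_mul]
    rw [hsum, hmon, pow_add]
    exact Ideal.mul_mem_mul
      (Ideal.pow_mem_pow (Ideal.subset_span (Set.mem_range_self a)) k) ih

/-- Let `A` be Noetherian and `I ⊆ S_A` an ideal with `B = S_A/I`
finitely generated as an `A`-module. If for every prime `p` of `A` the image of each
`αᵢ` in `B ⊗_A κ(p)` is nilpotent, then the image of each `αᵢ` in `B` is nilpotent; in
particular `(α₁,…,αₙ)^N ⊆ I` for some `N`, and consequently every `F ∈ P_A` with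
`I ⊆ Ann(F)` is a polynomial, i.e. lies in the image of `A[x₁,…,xₙ]` in `P_A`. -/
theorem nilpotent_on_fibres_implies_polynomial
    {A : Type*} [CommRing A] [IsNoetherianRing A] {n : ℕ}
    (I : Ideal (MvPolynomial (Fin n) A))
    (hfin : Module.Finite A (MvPolynomial (Fin n) A ⧸ I))
    (hnil : ∀ (p : PrimeSpectrum A) (i : Fin n),
      IsNilpotent
        ((Ideal.Quotient.mk I (X i)) ⊗ₜ[A] (1 : resField p) :
          (MvPolynomial (Fin n) A ⧸ I) ⊗[A] resField p)) :
    (∀ i : Fin n, IsNilpotent (Ideal.Quotient.mk I (X i))) ∧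
    (∃ N : ℕ,
      (Ideal.span (Set.range (X : Fin n → MvPolynomial (Fin n) A))) ^ N ≤ I) ∧
    (∀ F : Module.Dual A (MvPolynomial (Fin n) A),
      (∀ σ ∈ I, pact σ F = 0) → F ∈ LinearMap.range polyToDual) := by
  have h1 : ∀ i : Fin n, IsNilpotent (Ideal.Quotient.mk I (X i)) :=
    aux_mem_prime I hnil
  have hrad : Ideal.span (Set.range (X : Fin n → MvPolynomial (Fin n) A)) ≤ I.radical := by
    rw [Ideal.span_le]
    rintro _ ⟨i, rfl⟩
    obtain ⟨k, hk⟩ := h1 i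
    show X i ∈ I.radical
    rw [Ideal.mem_radical_iff]
    exact ⟨k, by rwa [← map_pow, Ideal.Quotient.eq_zero_iff_mem] at hk⟩
  obtain ⟨N, hN⟩ := Ideal.exists_radical_pow_le_of_fg I (IsNoetherian.noetherian _)
  have h2 : (Ideal.span (Set.range (X : Fin n → MvPolynomial (Fin n) A))) ^ N ≤ I :=
    le_trans (Ideal.pow_right_mono hrad N) hN
  refine ⟨h1, ⟨N, h2⟩, ?_⟩
  intro F hF
  -- monomials of high degree are killed
  have hkill : ∀ m : Fin n →₀ ℕ, N ≤ (m.sum fun _ e => e) → F (monomial m 1) = 0 := by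
    intro m hm
    have hmem : monomial m (1 : A) ∈ I :=
      h2 (Ideal.pow_le_pow_right hm (aux_monomial_mem m))
    have := congrArg (fun (G : Module.Dual A (MvPolynomial (Fin n) A)) => G 1) (hF _ hmem)
    simpa [pact_apply] using this
  classical
  set f : (Fin n →₀ ℕ) → A := fun m => F (monomial m 1) with hf
  have hsupp : (Function.support f).Finite := by
    apply Set.Finite.subset (Set.finite_Iic (Finsupp.equivFunOnFinite.symm fun _ : Fin n => N))
    intro m hm
    rw [Set.mem_Iic]
    intro i
    simp only [Finsupp.coe_equivFunOnFinite_symm]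
    by_contra hlt
    push_neg at hlt
    have : N ≤ m.sum fun _ e => e := by
      refine le_trans (le_of_lt hlt) ?_
      rcases eq_or_ne (m i) 0 with h | h
      · omega
      · exact Finset.single_le_sum (f := fun j => m j) (fun _ _ => Nat.zero_le _)
          (Finsupp.mem_support_iff.mpr h)
    exact hm (hkill m this)
  set fs := hsupp.toFinset with hfs
  refine ⟨∑ m ∈ fs, monomial m (f m), ?_⟩
  apply (MvPolynomial.basisMonomials (Fin n) A).ext
  intro m
  rw [polyToDual, Module.Basis.toDual_apply_left]
  have hrepr : (MvPolynomial.basisMonomials (Fin n) A).repr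
      (∑ m' ∈ fs, monomial m' (f m')) m = MvPolynomial.coeff m (∑ m' ∈ fs, monomial m' (f m')) :=
    rfl
  rw [hrepr, coe_basisMonomials]
  simp only [MvPolynomial.coeff_sum, MvPolynomial.coeff_monomial]
  rw [Finset.sum_ite_eq' fs m (fun m' => f m')]
  by_cases hmem : m ∈ fs
  · rw [if_pos hmem]
  · rw [if_neg hmem]
    have hfm : f m = 0 := by
      by_contra h
      exact hmem (hsupp.mem_toFinset.mpr h)
    exact hfm.symm


end RelativeApolarity
end
end

section
/- Let A be a reduced commutative Noetherian ring and let F ∈ A[x₁,…,xₙ] ⊆ P_A be a polynomial such that for every prime p of A with residue field κ(p), the apolar ideal Ann(F_p) ⊆ κ(p)[α₁,…,αₙ] of the induced functional F_p is a homogeneous ideal with respect to the standard grading. Then Ann(F) ⊆ A[α₁,…,αₙ] is a homogeneous ideal. -/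
noncomputable section

open MvPolynomial

namespace RelativeApolarity

variable {A : Type*} [CommRing A] {n : ℕ}

section Aux

lemma dualBC_basis (B : Type*) [CommRing B] [Algebra A B]
    (f : Module.Dual A (MvPolynomial (Fin n) A)) (m : (Fin n) →₀ ℕ) :
    dualBC B f (monomial m (1 : B)) = algebraMap A B (f (monomial m (1 : A))) := by
  have hb : (MvPolynomial.basisMonomials (Fin n) B) m = (monomial m (1 : B)) := by
    rw [coe_basisMonomials]
  rw [← hb]
  simp only [dualBC, LinearMap.comp_apply, LinearEquiv.coe_coe]
  erw [Module.Basis.constr_basis]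
  rfl

lemma dualBC_map (B : Type*) [CommRing B] [Algebra A B]
    (f : Module.Dual A (MvPolynomial (Fin n) A)) (τ : MvPolynomial (Fin n) A) :
    dualBC B f (MvPolynomial.map (algebraMap A B) τ) = algebraMap A B (f τ) := by
  induction τ using MvPolynomial.induction_on' with
  | monomial u a =>
      rw [MvPolynomial.map_monomial]
      have h1 : (monomial u (algebraMap A B a)) = (algebraMap A B a) • monomial u (1 : B) := by
        rw [smul_monomial, smul_eq_mul, mul_one]
      have h2 : (monomial u a : MvPolynomial (Fin n) A) = a • monomial u (1 : A) := by
        rw [smul_monomial, smul_eq_mul, mul_one]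
      rw [h1, map_smul, dualBC_basis, h2, map_smul, smul_eq_mul, smul_eq_mul, ← map_mul]
  | add p q hp hq =>
      rw [map_add, map_add, hp, hq, map_add, map_add]

lemma pact_dualBC (B : Type*) [CommRing B] [Algebra A B]
    (σ : MvPolynomial (Fin n) A) (f : Module.Dual A (MvPolynomial (Fin n) A)) :
    pact (MvPolynomial.map (algebraMap A B) σ) (dualBC B f) = dualBC B (pact σ f) := by
  apply (MvPolynomial.basisMonomials (Fin n) B).ext
  intro m
  have hb : (MvPolynomial.basisMonomials (Fin n) B) m = (monomial m (1 : B)) := by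
    rw [coe_basisMonomials]
  have hm : (monomial m (1 : B)) = MvPolynomial.map (algebraMap A B) (monomial m (1 : A)) := by
    rw [MvPolynomial.map_monomial]
    simp
  rw [hb, pact_apply, hm, ← map_mul, dualBC_map, dualBC_map, pact_apply]

lemma map_homogeneousComponent {B : Type*} [CommRing B] (φ : A →+* B)
    (k : ℕ) (σ : MvPolynomial (Fin n) A) :
    MvPolynomial.map φ (MvPolynomial.homogeneousComponent k σ) =
      MvPolynomial.homogeneousComponent k (MvPolynomial.map φ σ) := by
  ext m
  simp only [MvPolynomial.coeff_map, MvPolynomial.coeff_homogeneousComponent]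
  split <;> simp

lemma dual_eq_zero_of_forall_prime (g : Module.Dual A (MvPolynomial (Fin n) A))
    [IsReduced A]
    (h : ∀ p : PrimeSpectrum A, dualBC (resField p) g = 0) : g = 0 := by
  apply (MvPolynomial.basisMonomials (Fin n) A).ext
  intro m
  rw [coe_basisMonomials, LinearMap.zero_apply]
  set a := g (monomial m (1 : A)) with ha
  have hmem : ∀ p : PrimeSpectrum A, a ∈ p.asIdeal := by
    intro p
    have h0 : dualBC (resField p) g (monomial m (1 : resField p)) = 0 := by
      rw [h p]; rfl
    rw [dualBC_basis] at h0
    -- algebraMap A (resField p) a = 0 → a ∈ p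
    have : algebraMap A (resField p) a = 0 := h0
    have hcomp : algebraMap A (resField p) a =
        IsLocalRing.residue (Localization.AtPrime p.asIdeal)
          (algebraMap A (Localization.AtPrime p.asIdeal) a) := rfl
    rw [hcomp] at this
    have hmax : algebraMap A (Localization.AtPrime p.asIdeal) a ∈
        IsLocalRing.maximalIdeal (Localization.AtPrime p.asIdeal) := by
      exact Ideal.Quotient.eq_zero_iff_mem.mp this
    exact (IsLocalization.AtPrime.to_map_mem_maximal_iff
      (Localization.AtPrime p.asIdeal) p.asIdeal a).mp hmax
  have hnil : IsNilpotent a := by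
    rw [nilpotent_iff_mem_prime]
    intro J hJ
    exact hmem ⟨J, hJ⟩
  exact hnil.eq_zero

end Aux

/-- Let `A` be a reduced Noetherian ring and `F = polyToDual G ∈ P_A`
a polynomial functional such that for every prime `p` of `A` the apolar ideal
`Ann(F_p) ⊆ κ(p)[α₁,…,αₙ]` is homogeneous. Then `Ann(F) ⊆ A[α₁,…,αₙ]` is homogeneous
(an ideal is homogeneous when it contains all homogeneous components of its members). -/
theorem ann_homogeneous_of_fibrewise_homogeneous
    {A : Type*} [CommRing A] [IsNoetherianRing A] [IsReduced A] {n : ℕ}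
    (G : MvPolynomial (Fin n) A)
    (hfib : ∀ p : PrimeSpectrum A,
      ∀ σ ∈ annRel (dualBC (resField p) (polyToDual G)),
        ∀ k : ℕ, MvPolynomial.homogeneousComponent k σ ∈
          annRel (dualBC (resField p) (polyToDual G))) :
    ∀ σ ∈ annRel (polyToDual G),
      ∀ k : ℕ, MvPolynomial.homogeneousComponent k σ ∈ annRel (polyToDual G) := by
  intro σ hσ k
  show pact (MvPolynomial.homogeneousComponent k σ) (polyToDual G) = 0
  apply dual_eq_zero_of_forall_prime
  intro p
  have hσp : MvPolynomial.map (algebraMap A (resField p)) σ ∈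
      annRel (dualBC (resField p) (polyToDual G)) := by
    show pact _ _ = 0
    rw [pact_dualBC]
    have : pact σ (polyToDual G) = 0 := hσ
    rw [this]
    exact map_zero _
  have hcomp := hfib p _ hσp k
  have hz : pact (MvPolynomial.map (algebraMap A (resField p))
      (MvPolynomial.homogeneousComponent k σ)) (dualBC (resField p) (polyToDual G)) = 0 := by
    rw [map_homogeneousComponent]
    exact hcomp
  rw [pact_dualBC] at hz
  exact hz

end RelativeApolarity
end
end

section
/- Let A be a commutative Noetherian ring and N ⊆ P_A an S_A-submodule which is finitely generated as an A-module. Then there exists a finite set M of monomials in S_A such that, setting P_{A,N} := Hom_A(A⟨M⟩, A) (where A⟨M⟩ is the free A-submodule of S_A spanned by M), with the A-linear projection p : P_A → P_{A,N} given by restriction of functionals and the A-linear section P_{A,N} → P_A sending f to the polynomial Σ_{x^m : α^m ∈ M} f(α^m)x^m, the following hold: (1) the restriction of p to N is injective; (2) P_{A,N}/p(N) is a flat A-module if and only if P_A/N is a flat A-module; (3) for every ring homomorphism A → B the natural map B ⊗_A P_{A,N} → P_B is injective and its image is a B-module direct summand of P_B. In particular P_{A,N} is a finitely generated flat A-module.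 -/
noncomputable section

open MvPolynomial

namespace RelativeApolarity

variable {A : Type*} [CommRing A] {n : ℕ}

section Aux

open TensorProduct LinearMap

variable {R : Type*} [CommRing R]

/-- Swapping the arguments of a doubly-indexed family of scalars, as a linear equivalence. -/
def swapLE (R : Type*) [CommRing R] (α β : Type*) : (α → β → R) ≃ₗ[R] (β → α → R) where
  toFun f := Function.swap f
  invFun f := Function.swap f
  map_add' _ _ := rfl
  map_smul' _ _ := rfl
  left_inv _ := rfl
  right_inv _ := rfl

lemma psi_natural {N P : Type*} [AddCommGroup N] [Module R N] [AddCommGroup P] [Module R P]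
    (φ : N →ₗ[R] P) (X : Type*) :
    (TensorProduct.piScalarRightHom R R P X).comp (LinearMap.rTensor (X → R) φ) =
      (LinearMap.compLeft φ X).comp (TensorProduct.piScalarRightHom R R N X) := by
  apply TensorProduct.ext'
  intro m f
  funext x
  simp [LinearMap.compLeft]
  exact (φ.map_smul (f x) m).symm

lemma psi_fin_bijective (R : Type*) [CommRing R] (X : Type*) (m : ℕ) :
    Function.Bijective (TensorProduct.piScalarRightHom R R (Fin m → R) X) := by
  classical
  have h : (TensorProduct.piScalarRightHom R R (Fin m → R) X) =
      ((TensorProduct.comm R (Fin m → R) (X → R)).trans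
        ((TensorProduct.piScalarRight R R (X → R) (Fin m)).trans
        (swapLE R (Fin m) X))).toLinearMap := by
    apply TensorProduct.ext'
    intro v f
    funext x i
    simp [swapLE, Function.swap, mul_comm]
  rw [h]
  exact (LinearEquiv.bijective _)

/-- Over a Noetherian ring, arbitrary products of the base ring are flat. -/
lemma flat_pi (R : Type*) [CommRing R] [IsNoetherianRing R] (X : Type*) :
    Module.Flat R (X → R) := by
  rw [Module.Flat.iff_lift_lsmul_comp_subtype_injective]
  intro I hI
  have hfac : (TensorProduct.lift ((LinearMap.lsmul R (X → R)).comp I.subtype)) =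
      (LinearMap.compLeft I.subtype X).comp (TensorProduct.piScalarRightHom R R I X) := by
    apply TensorProduct.ext'
    intro i f
    funext x
    simp [LinearMap.compLeft, mul_comm]
  rw [hfac, LinearMap.coe_comp]
  apply Function.Injective.comp
  · intro u w h
    funext x
    exact Subtype.ext (congrFun h x)
  haveI : Module.Finite R I := ⟨(Submodule.fg_top I).mpr hI⟩
  obtain ⟨r, π, hπ⟩ := Module.Finite.exists_fin' R I
  haveI : Module.Finite R (LinearMap.ker π) :=
    ⟨(Submodule.fg_top _).mpr (IsNoetherian.noetherian _)⟩
  obtain ⟨k, ρ, hρ⟩ := Module.Finite.exists_fin' R (LinearMap.ker π)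
  set g : (Fin k → R) →ₗ[R] (Fin r → R) := (LinearMap.ker π).subtype.comp ρ with hg
  have hexact : Function.Exact g π := by
    rw [LinearMap.exact_iff, hg, LinearMap.range_comp, LinearMap.range_eq_top.mpr hρ,
      Submodule.map_top, Submodule.range_subtype]
  rw [injective_iff_map_eq_zero]
  intro t ht
  obtain ⟨y, rfl⟩ := LinearMap.rTensor_surjective (X → R) hπ t
  have h1 : LinearMap.compLeft π X (TensorProduct.piScalarRightHom R R (Fin r → R) X y) = 0 := by
    have hnat := congrArg (fun (F : (Fin r → R) ⊗[R] (X → R) →ₗ[R] (X → ↥I)) => F y)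
      (psi_natural (R := R) π X)
    simp only [LinearMap.comp_apply] at hnat
    rw [← hnat, ht]
  have h2 : ∀ x, (TensorProduct.piScalarRightHom R R (Fin r → R) X y) x ∈ LinearMap.range g := by
    intro x
    rw [← LinearMap.exact_iff.mp hexact]
    have := congrFun h1 x
    exact LinearMap.mem_ker.mpr this
  choose h3 hh3 using h2
  obtain ⟨z, hz⟩ := (psi_fin_bijective R X k).surjective h3
  have h4 : TensorProduct.piScalarRightHom R R (Fin r → R) X (LinearMap.rTensor (X → R) g z) =
      TensorProduct.piScalarRightHom R R (Fin r → R) X y := by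
    have hnat := congrArg (fun (F : (Fin k → R) ⊗[R] (X → R) →ₗ[R] (X → Fin r → R)) => F z)
      (psi_natural (R := R) g X)
    simp only [LinearMap.comp_apply] at hnat
    rw [hnat, hz]
    funext x
    exact hh3 x
  have h5 := (psi_fin_bijective R X r).injective h4
  rw [← h5]
  exact (rTensor_exact (X → R) hexact hπ).apply_apply_eq_zero z

lemma range_lift_lsmul {P : Type*} [AddCommGroup P] [Module R P] (I : Ideal R) :
    LinearMap.range (TensorProduct.lift ((LinearMap.lsmul R P).comp I.subtype)) =
      (I • ⊤ : Submodule R P) := by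
  apply le_antisymm
  · rintro x ⟨t, rfl⟩
    induction t using TensorProduct.induction_on with
    | zero => simp
    | tmul i p =>
      simp only [TensorProduct.lift.tmul, LinearMap.coe_comp, Function.comp_apply,
        Submodule.coe_subtype, LinearMap.lsmul_apply]
      exact Submodule.smul_mem_smul i.2 Submodule.mem_top
    | add a b ha hb =>
      rw [map_add]
      exact Submodule.add_mem _ ha hb
  · intro x hx
    refine Submodule.smul_induction_on hx (fun r hr p _ => ⟨⟨r, hr⟩ ⊗ₜ p, by simp⟩) ?_
    rintro x y ⟨a, rfl⟩ ⟨b, rfl⟩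
    exact ⟨a + b, map_add _ _ _⟩

lemma quot_lift_injective_iff {P : Type*} [AddCommGroup P] [Module R P] [Module.Flat R P]
    (N : Submodule R P) (I : Ideal R) :
    Function.Injective (TensorProduct.lift ((LinearMap.lsmul R (P ⧸ N)).comp I.subtype)) ↔
      N ⊓ (I • ⊤ : Submodule R P) ≤ I • N := by
  set μP := TensorProduct.lift ((LinearMap.lsmul R P).comp I.subtype) with hμP
  set μQ := TensorProduct.lift ((LinearMap.lsmul R (P ⧸ N)).comp I.subtype) with hμQ
  have hμPinj : Function.Injective μP := by
    have h1 : Function.Injective (LinearMap.rTensor P I.subtype) :=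
      (Module.Flat.iff_rTensor_injective' (R := R) (M := P)).mp inferInstance I
    have h2 : μP = (TensorProduct.lid R P).toLinearMap.comp (LinearMap.rTensor P I.subtype) := by
      rw [hμP, LinearMap.lid_comp_rTensor]
    rw [h2, LinearMap.coe_comp]
    exact (TensorProduct.lid R P).injective.comp h1
  have hnat : ∀ y : ↥I ⊗[R] P,
      μQ (LinearMap.lTensor ↥I N.mkQ y) = N.mkQ (μP y) := by
    intro y
    have : μQ.comp (LinearMap.lTensor ↥I N.mkQ) = N.mkQ.comp μP := by
      apply TensorProduct.ext'
      intro i pp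
      simp [hμQ, hμP]
    have := congrArg (fun (F : ↥I ⊗[R] P →ₗ[R] P ⧸ N) => F y) this
    simpa using this
  have hker := lTensor_mkQ (Q := ↥I) N
  have himg : ∀ z : ↥I ⊗[R] ↥N, μP (LinearMap.lTensor ↥I N.subtype z) ∈ I • N := by
    intro z
    induction z using TensorProduct.induction_on with
    | zero => simp
    | tmul i nn =>
      simp only [LinearMap.lTensor_tmul, hμP, TensorProduct.lift.tmul, LinearMap.coe_comp,
        Function.comp_apply, Submodule.coe_subtype, LinearMap.lsmul_apply]
      exact Submodule.smul_mem_smul i.2 nn.2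
    | add a b ha hb =>
      rw [map_add, map_add]
      exact Submodule.add_mem _ ha hb
  have hsub : (I • N : Submodule R P) ≤
      LinearMap.range (μP.comp (LinearMap.lTensor ↥I N.subtype)) := by
    intro x hx
    refine Submodule.smul_induction_on hx (fun r hr nn hnn => ⟨⟨r, hr⟩ ⊗ₜ ⟨nn, hnn⟩, by simp [hμP]⟩) ?_
    rintro x y ⟨a, rfl⟩ ⟨b, rfl⟩
    exact ⟨a + b, map_add _ _ _⟩
  constructor
  · intro hinj x hx
    obtain ⟨hxN, hxI⟩ := hx
    rw [← range_lift_lsmul I, ← hμP] at hxI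
    obtain ⟨y, rfl⟩ := hxI
    have h0 : μQ (LinearMap.lTensor ↥I N.mkQ y) = 0 := by
      rw [hnat y, Submodule.mkQ_apply, Submodule.Quotient.mk_eq_zero]
      exact hxN
    have h1 : LinearMap.lTensor ↥I N.mkQ y = 0 := by
      apply hinj
      rw [h0, map_zero]
    have h2 : y ∈ LinearMap.range (LinearMap.lTensor ↥I N.subtype) := by
      rw [← hker]
      exact LinearMap.mem_ker.mpr h1
    obtain ⟨z, rfl⟩ := h2
    exact himg z
  · intro hcond
    rw [injective_iff_map_eq_zero]
    intro t ht
    obtain ⟨y, rfl⟩ := LinearMap.lTensor_surjective ↥I (N.mkQ_surjective) t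
    have h0 : μP y ∈ N := by
      have := hnat y
      rw [ht] at this
      rw [← Submodule.Quotient.mk_eq_zero N, ← Submodule.mkQ_apply, ← this]
    have h1 : μP y ∈ (I • ⊤ : Submodule R P) := by
      rw [← range_lift_lsmul I, ← hμP]
      exact ⟨y, rfl⟩
    obtain ⟨z, hz⟩ := hsub (hcond ⟨h0, h1⟩)
    simp only [LinearMap.comp_apply] at hz
    have h2 : LinearMap.lTensor ↥I N.subtype z = y := hμPinj hz
    rw [← h2]
    exact (lTensor_exact ↥I (LinearMap.exact_subtype_mkQ N) (N.mkQ_surjective)).apply_apply_eq_zero z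

/-- A quotient of a flat module is flat iff `N ⊓ I•P = I•N` for all f.g. ideals. -/
lemma flat_quot_iff {P : Type*} [AddCommGroup P] [Module R P] [Module.Flat R P]
    (N : Submodule R P) :
    Module.Flat R (P ⧸ N) ↔ ∀ I : Ideal R, I.FG → N ⊓ (I • ⊤ : Submodule R P) ≤ I • N := by
  rw [Module.Flat.iff_lift_lsmul_comp_subtype_injective]
  constructor
  · intro h I hI
    exact (quot_lift_injective_iff N I).mp (h hI)
  · intro h I hI
    exact (quot_lift_injective_iff N I).mpr (h I hI)

lemma apply_mem_of_mem_smul_top {V : Type*} [AddCommGroup V] [Module R V] {I : Ideal R}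
    {h : Module.Dual R V} (hh : h ∈ (I • ⊤ : Submodule R (Module.Dual R V))) (x : V) :
    h x ∈ I := by
  refine Submodule.smul_induction_on hh (fun r hr f _ => ?_) (fun f g hf hg => ?_)
  · simp only [LinearMap.smul_apply, smul_eq_mul]
    exact I.mul_mem_right _ hr
  · simp only [LinearMap.add_apply]
    exact I.add_mem hf hg

lemma mem_smul_top_of_basis {V ι : Type*} [AddCommGroup V] [Module R V] (b : Module.Basis ι R V)
    {I : Ideal R} (hI : I.FG) (h : Module.Dual R V) (hvals : ∀ i, h (b i) ∈ I) :
    h ∈ (I • ⊤ : Submodule R (Module.Dual R V)) := by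
  classical
  obtain ⟨T, hT⟩ := hI
  have hc : ∀ i, ∃ c : R → R, (∑ t ∈ T, c t • t) = h (b i) := by
    intro i
    refine (Submodule.mem_span_finset.mp ?_).imp fun c hc => hc.2
    rw [show Submodule.span R (↑T : Set R) = I from hT]
    exact hvals i
  choose c hcc using hc
  have hrepr : h = ∑ t ∈ T, t • (b.constr (M' := R) R fun i => c i t) := by
    apply b.ext
    intro i
    rw [LinearMap.sum_apply]
    simp only [LinearMap.smul_apply, Module.Basis.constr_basis, smul_eq_mul]
    rw [← hcc i]
    exact Finset.sum_congr rfl fun t _ => by rw [smul_eq_mul, mul_comm]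
  rw [hrepr]
  refine Submodule.sum_mem _ fun t ht => ?_
  exact Submodule.smul_mem_smul (hT ▸ Submodule.subset_span ht) Submodule.mem_top

end Aux

set_option maxHeartbeats 2000000 in
set_option synthInstance.maxHeartbeats 200000 in
/-- replacing `P_A` by a finitely generated piece. Let `A` be Noetherian
and `N ⊆ P_A` an `S_A`-submodule which is finitely generated over `A`. Then there is a
finite set `M` of monomials such that, with `P_{A,N} := Hom_A(A⟨M⟩, A)`, the restriction
projection `p : P_A → P_{A,N}` and the section `s : P_{A,N} → P_A`,
`s(f) = Σ_{α^m ∈ M} f(α^m)x^m`: (0) `s` is a section of `p`; (1) `p` is injective on `N`;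
(2) `P_{A,N}/p(N)` is flat iff `P_A/N` is flat; (3) for every `A`-algebra `B` the natural
map `B ⊗_A P_{A,N} → P_B` is injective with image a direct summand; in particular
`P_{A,N}` is finitely generated and flat over `A`. -/
theorem finite_approximation_of_inverse_system
    {A : Type*} [CommRing A] [IsNoetherianRing A] {n : ℕ}
    (N : Submodule A (Module.Dual A (MvPolynomial (Fin n) A)))
    (hSmod : ∀ (σ : MvPolynomial (Fin n) A), ∀ f ∈ N, pact σ f ∈ N)
    (hfg : N.FG) :
    ∃ M : Finset ((Fin n) →₀ ℕ),
      let W : Submodule A (MvPolynomial (Fin n) A) :=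
        Submodule.span A
          ((fun m => MvPolynomial.monomial m (1 : A)) '' (M : Set ((Fin n) →₀ ℕ)));
      let p : Module.Dual A (MvPolynomial (Fin n) A) →ₗ[A] Module.Dual A ↥W :=
        W.subtype.dualMap;
      ∃ s : Module.Dual A ↥W →ₗ[A] Module.Dual A (MvPolynomial (Fin n) A),
        (∀ f : Module.Dual A ↥W,
          s f = polyToDual (∑ m ∈ M.attach,
            f ⟨MvPolynomial.monomial m.1 1,
                Submodule.subset_span ⟨m.1, Finset.mem_coe.mpr m.2, rfl⟩⟩ •
              MvPolynomial.monomial m.1 1)) ∧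
        (∀ f : Module.Dual A ↥W, p (s f) = f) ∧
        Function.Injective (p.comp N.subtype) ∧
        (Module.Flat A (Module.Dual A ↥W ⧸ N.map p) ↔
          Module.Flat A (Module.Dual A (MvPolynomial (Fin n) A) ⧸ N)) ∧
        (∀ (B : Type*) [CommRing B] [Algebra A B],
          Function.Injective (LinearMap.liftBaseChange B ((dualBC B).comp s)) ∧
          ∃ C : Submodule B (Module.Dual B (MvPolynomial (Fin n) B)),
            IsCompl (LinearMap.range (LinearMap.liftBaseChange B ((dualBC B).comp s))) C) ∧
        Module.Finite A (Module.Dual A ↥W) ∧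
        Module.Flat A (Module.Dual A ↥W) := by
  classical
  haveI : Module.Finite A ↥N := ⟨(Submodule.fg_top N).mpr hfg⟩
  obtain ⟨r, q, hq⟩ := Module.Finite.exists_fin' A ↥N
  haveI : Module.Finite A (Module.Dual A (Fin r → A)) :=
    Module.Finite.of_basis (Pi.basisFun A (Fin r)).dualBasis
  haveI : IsNoetherian A (↥N →ₗ[A] A) := by
    refine isNoetherian_of_injective (q.dualMap) ?_
    intro f₁ f₂ h12
    apply LinearMap.ext
    intro x
    obtain ⟨u, rfl⟩ := hq x
    exact LinearMap.congr_fun h12 u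
  obtain ⟨E, ⟨M₀, hE⟩, hmax⟩ :=
    set_has_maximal_iff_noetherian.mpr ‹IsNoetherian A (↥N →ₗ[A] A)›
      (Set.range fun M' : Finset ((Fin n) →₀ ℕ) =>
        Submodule.span A ((fun m => N.subtype.flip (MvPolynomial.monomial m (1:A))) '' ↑M'))
      ⟨_, ⟨∅, rfl⟩⟩
  have hM : ∀ a : (Fin n) →₀ ℕ, N.subtype.flip (MvPolynomial.monomial a (1:A)) ∈
      Submodule.span A ((fun m => N.subtype.flip (MvPolynomial.monomial m (1:A))) '' ↑M₀) := by
    intro a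
    by_contra hc
    refine hmax _ ⟨insert a M₀, rfl⟩ ?_
    rw [← hE]
    show Submodule.span A ((fun m => N.subtype.flip (MvPolynomial.monomial m (1:A))) '' ↑M₀)
      < Submodule.span A
        ((fun m => N.subtype.flip (MvPolynomial.monomial m (1:A))) '' ↑(insert a M₀))
    refine lt_of_le_of_ne (Submodule.span_mono
      (Set.image_mono (Finset.coe_subset.mpr (Finset.subset_insert a M₀)))) fun heq => hc ?_
    rw [heq]
    exact Submodule.subset_span ⟨a, by simp, rfl⟩
  have KL : ∀ g : Module.Dual A (MvPolynomial (Fin n) A), g ∈ N → ∀ I : Ideal A,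
      (∀ m ∈ M₀, g (MvPolynomial.monomial m 1) ∈ I) → ∀ σ, g σ ∈ I := by
    intro g hg I hvals σ
    have hmono : ∀ a : (Fin n) →₀ ℕ, g (MvPolynomial.monomial a 1) ∈ I := by
      intro a
      have h2 : Submodule.span A
          ((fun m => N.subtype.flip (MvPolynomial.monomial m (1:A))) '' ↑M₀)
          ≤ Submodule.comap (LinearMap.applyₗ (⟨g, hg⟩ : ↥N)) I := by
        rw [Submodule.span_le]
        rintro _ ⟨m, hm, rfl⟩
        exact hvals m hm
      exact Submodule.mem_comap.mp (h2 (hM a))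
    have hgs : g σ = ∑ v ∈ σ.support, MvPolynomial.coeff v σ • g (MvPolynomial.monomial v 1) := by
      conv_lhs => rw [MvPolynomial.as_sum σ]
      rw [map_sum]
      refine Finset.sum_congr rfl fun v _ => ?_
      rw [← map_smul]
      congr 1
      rw [MvPolynomial.smul_monomial, smul_eq_mul, mul_one]
    rw [hgs]
    refine Submodule.sum_mem _ fun v _ => ?_
    rw [smul_eq_mul]
    exact Ideal.mul_mem_left _ _ (hmono v)
  refine ⟨M₀, ?_⟩
  intro W p
  -- basic objects
  let wElt : {x // x ∈ M₀} → ↥W := fun m =>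
    ⟨MvPolynomial.monomial m.1 1,
      Submodule.subset_span ⟨m.1, Finset.mem_coe.mpr m.2, rfl⟩⟩
  let sMap : Module.Dual A ↥W →ₗ[A] Module.Dual A (MvPolynomial (Fin n) A) :=
    polyToDual.comp (∑ m ∈ M₀.attach,
      LinearMap.smulRight (LinearMap.applyₗ (wElt m)) (MvPolynomial.monomial m.1 1))
  have hsform : ∀ f : Module.Dual A ↥W,
      sMap f = polyToDual (∑ m ∈ M₀.attach, f (wElt m) • MvPolynomial.monomial m.1 1) := by
    intro f
    rw [show sMap f = polyToDual ((∑ m ∈ M₀.attach,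
      LinearMap.smulRight (LinearMap.applyₗ (wElt m)) (MvPolynomial.monomial m.1 1)) f) from rfl]
    congr 1
    rw [LinearMap.sum_apply]
    exact Finset.sum_congr rfl fun m _ => rfl
  have hli : LinearIndependent A
      (fun m : {x // x ∈ M₀} => MvPolynomial.monomial (R := A) m.1 (1:A)) := by
    have hfun : (fun m : {x // x ∈ M₀} => MvPolynomial.monomial (R := A) m.1 (1:A))
        = (MvPolynomial.basisMonomials (Fin n) A) ∘ (fun m : {x // x ∈ M₀} => m.1) := by
      funext m
      simp [MvPolynomial.coe_basisMonomials]
    rw [hfun]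
    exact ((MvPolynomial.basisMonomials (Fin n) A).linearIndependent).comp _ Subtype.val_injective
  have hWspan : Submodule.span A (Set.range fun m : {x // x ∈ M₀} =>
      MvPolynomial.monomial (R := A) m.1 (1:A)) = W := by
    show _ = Submodule.span A _
    congr 1
    ext x
    constructor
    · rintro ⟨m, rfl⟩
      exact ⟨m.1, m.2, rfl⟩
    · rintro ⟨a, ha, rfl⟩
      exact ⟨⟨a, ha⟩, rfl⟩
  let basisW : Module.Basis {x // x ∈ M₀} A ↥W := (Module.Basis.span hli).map (LinearEquiv.ofEq _ _ hWspan)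
  have hbW : ∀ m, ((basisW m : ↥W) : MvPolynomial (Fin n) A) = MvPolynomial.monomial m.1 1 := by
    intro m
    simp [basisW, Module.Basis.span_apply]
  have hbW' : ∀ m, basisW m = wElt m := fun m => Subtype.ext (hbW m)
  have sKey : ∀ (f : Module.Dual A ↥W) (a : (Fin n) →₀ ℕ),
      sMap f (MvPolynomial.monomial a 1) = if h : a ∈ M₀ then f (wElt ⟨a, h⟩) else 0 := by
    intro f a
    have hb : ∀ c : (Fin n) →₀ ℕ, MvPolynomial.monomial (R := A) c (1:A)
        = MvPolynomial.basisMonomials (Fin n) A c := by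
      simp [MvPolynomial.coe_basisMonomials]
    rw [hsform f, map_sum, LinearMap.sum_apply]
    have hterm : ∀ m ∈ M₀.attach,
        (polyToDual (f (wElt m) • MvPolynomial.monomial m.1 (1:A)))
          (MvPolynomial.monomial a 1) = if m.1 = a then f (wElt m) else 0 := by
      intro m _
      rw [map_smul, LinearMap.smul_apply, hb m.1, hb a]
      simp only [polyToDual, Module.Basis.toDual_apply, smul_eq_mul, mul_ite, mul_one, mul_zero]
    rw [Finset.sum_congr rfl hterm]
    by_cases h : a ∈ M₀
    · rw [dif_pos h]
      rw [Finset.sum_eq_single_of_mem (⟨a, h⟩ : {x // x ∈ M₀}) (M₀.mem_attach _)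
        (fun m _ hne => if_neg fun he => hne (Subtype.ext he)), if_pos rfl]
    · rw [dif_neg h]
      exact Finset.sum_eq_zero fun m _ => if_neg fun he => h (by rw [← he]; exact m.2)
  have hsec : ∀ f, p (sMap f) = f := by
    intro f
    refine basisW.ext fun m => ?_
    have h0 : p (sMap f) (basisW m) = sMap f ((basisW m : ↥W) : MvPolynomial (Fin n) A) := rfl
    rw [h0, hbW m, sKey, dif_pos m.2]
    rw [hbW' m]
  have hinjN : ∀ g, g ∈ N → p g = 0 → g = 0 := by
    intro g hg hpg
    apply LinearMap.ext
    intro σ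
    have h0 : ∀ m ∈ M₀, g (MvPolynomial.monomial m 1) ∈ (⊥ : Ideal A) := by
      intro m hm
      have := LinearMap.congr_fun hpg (wElt ⟨m, hm⟩)
      exact (Submodule.mem_bot A).mpr this
    have := KL g hg ⊥ h0 σ
    simpa using this
  have hinj : Function.Injective ⇑(p.comp N.subtype) := by
    intro g₁ g₂ h12
    apply Subtype.ext
    have hsub : ((g₁ : Module.Dual A (MvPolynomial (Fin n) A)) - ↑g₂) ∈ N :=
      N.sub_mem g₁.2 g₂.2
    have hz : p ((g₁ : Module.Dual A (MvPolynomial (Fin n) A)) - ↑g₂) = 0 := by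
      rw [map_sub]
      exact sub_eq_zero.mpr h12
    exact sub_eq_zero.mp (hinjN _ hsub hz)
  haveI := flat_pi A ((Fin n) →₀ ℕ)
  haveI : Module.Flat A (Module.Dual A (MvPolynomial (Fin n) A)) :=
    Module.Flat.of_linearEquiv
      (((MvPolynomial.basisMonomials (Fin n) A).constr (M' := A) A).symm)
  haveI : Module.Finite A (Module.Dual A ↥W) := Module.Finite.of_basis basisW.dualBasis
  haveI : Module.Free A (Module.Dual A ↥W) := Module.Free.of_basis basisW.dualBasis
  haveI : Module.Flat A (Module.Dual A ↥W) := Module.Flat.of_free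
  have hWvals : ∀ (g : Module.Dual A (MvPolynomial (Fin n) A)) (m : {x // x ∈ M₀}),
      p g (basisW m) = g (MvPolynomial.monomial m.1 1) := by
    intro g m
    have h0 : p g (basisW m) = g ((basisW m : ↥W) : MvPolynomial (Fin n) A) := rfl
    rw [h0, hbW m]
  have hflatiff : (Module.Flat A (Module.Dual A ↥W ⧸ N.map p) ↔
      Module.Flat A (Module.Dual A (MvPolynomial (Fin n) A) ⧸ N)) := by
    rw [flat_quot_iff, flat_quot_iff]
    constructor
    · intro hW I hI
      rintro g ⟨hgN, hgI⟩
      have hvals : ∀ σ, g σ ∈ I := fun σ => apply_mem_of_mem_smul_top hgI σ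
      have h1 : p g ∈ (I • ⊤ : Submodule A (Module.Dual A ↥W)) :=
        mem_smul_top_of_basis basisW hI _ fun m => by rw [hWvals]; exact hvals _
      have h2 : p g ∈ I • N.map p := hW I hI ⟨Submodule.mem_map_of_mem hgN, h1⟩
      rw [← Submodule.map_smul''] at h2
      obtain ⟨g', hg', hpg⟩ := h2
      have hg'N : g' ∈ N := Submodule.smul_le_right hg'
      have heq : g - g' = 0 := by
        refine hinjN _ (N.sub_mem hgN hg'N) ?_
        rw [map_sub, hpg, sub_self]
      rw [show g = g' from sub_eq_zero.mp heq]
      exact hg'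
    · intro hP I hI
      rintro h' ⟨⟨g, hgN, rfl⟩, hI'⟩
      have hvv : ∀ m ∈ M₀, g (MvPolynomial.monomial m 1) ∈ I := by
        intro m hm
        have := apply_mem_of_mem_smul_top hI' (basisW ⟨m, hm⟩)
        rwa [hWvals] at this
      have hvals := KL g hgN I hvv
      have hPmem : g ∈ (I • ⊤ : Submodule A (Module.Dual A (MvPolynomial (Fin n) A))) := by
        refine mem_smul_top_of_basis (MvPolynomial.basisMonomials (Fin n) A) hI g fun i => ?_
        rw [show ((MvPolynomial.basisMonomials (Fin n) A) i) = MvPolynomial.monomial i 1 from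
          by simp [MvPolynomial.coe_basisMonomials]]
        exact hvals _
      have hmem := hP I hI ⟨hgN, hPmem⟩
      rw [← Submodule.map_smul'']
      exact Submodule.mem_map_of_mem hmem
  refine ⟨sMap, hsform, hsec, hinj, hflatiff, ?_, inferInstance, inferInstance⟩
  intro B _ _
  have hdbc : ∀ (g : Module.Dual A (MvPolynomial (Fin n) A)),
      dualBC (n := n) B g = (MvPolynomial.basisMonomials (Fin n) B).constr (M' := B) A
        (fun m => algebraMap A B (g (MvPolynomial.monomial m 1))) := fun g => rfl
  set bB := MvPolynomial.basisMonomials (Fin n) B with hbB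
  have hbBc : ∀ a : (Fin n) →₀ ℕ, MvPolynomial.monomial (R := B) a (1:B) = bB a := by
    intro a
    rw [hbB, MvPolynomial.coe_basisMonomials]
  set L := LinearMap.liftBaseChange B ((dualBC B).comp sMap) with hL
  set bT := basisW.dualBasis.baseChange B with hbT
  have hsd : ∀ m : {x // x ∈ M₀},
      dualBC (n := n) B (sMap (basisW.dualBasis m)) = bB.coord m.1 := by
    intro m
    refine bB.ext fun a => ?_
    rw [hdbc, Module.Basis.constr_basis, sKey]
    rw [Module.Basis.coord_apply, Module.Basis.repr_self, Finsupp.single_apply]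
    by_cases h : a ∈ M₀
    · rw [dif_pos h, ← hbW' ⟨a, h⟩, Module.Basis.dualBasis_apply_self]
      by_cases he : (⟨a, h⟩ : {x // x ∈ M₀}) = m
      · rw [if_pos he, map_one, if_pos (by rw [← he])]
      · rw [if_neg he, map_zero, if_neg (fun hv : a = m.1 => he (Subtype.ext hv))]
    · rw [dif_neg h, map_zero, if_neg (fun hv : a = m.1 => h (by rw [hv]; exact m.2))]
  have hbTapp : ∀ m : {x // x ∈ M₀}, L (bT m) = bB.coord m.1 := by
    intro m
    rw [hbT, Module.Basis.baseChange_apply, hL, LinearMap.liftBaseChange_tmul, one_smul,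
      LinearMap.comp_apply]
    exact hsd m
  have hEval : ∀ (c : {x // x ∈ M₀} → B) (a : (Fin n) →₀ ℕ),
      (∑ m : {x // x ∈ M₀}, c m • bB.coord m.1) (MvPolynomial.monomial a 1)
        = if h : a ∈ M₀ then c ⟨a, h⟩ else 0 := by
    intro c a
    rw [LinearMap.sum_apply]
    have hterm : ∀ m : {x // x ∈ M₀}, (c m • bB.coord m.1) (MvPolynomial.monomial a (1:B))
        = if m.1 = a then c m else 0 := by
      intro m
      rw [LinearMap.smul_apply, hbBc a, Module.Basis.coord_apply, Module.Basis.repr_self,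
        Finsupp.single_apply, smul_eq_mul, mul_ite, mul_one, mul_zero]
      exact if_congr eq_comm rfl rfl
    rw [Finset.sum_congr rfl (fun m _ => hterm m)]
    by_cases h : a ∈ M₀
    · rw [dif_pos h, Finset.sum_eq_single_of_mem (⟨a, h⟩ : {x // x ∈ M₀}) (Finset.mem_univ _)
        (fun m _ hne => if_neg fun he => hne (Subtype.ext he)), if_pos rfl]
    · rw [dif_neg h]
      exact Finset.sum_eq_zero fun m _ => if_neg fun he => h (by rw [← he]; exact m.2)
  have hLrepr : ∀ x : TensorProduct A B (Module.Dual A ↥W),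
      L x = ∑ m : {x // x ∈ M₀}, bT.repr x m • bB.coord m.1 := by
    intro x
    conv_lhs => rw [← bT.sum_repr x]
    rw [map_sum]
    exact Finset.sum_congr rfl fun m _ => by rw [map_smul, hbTapp]
  have hLval : ∀ (x : TensorProduct A B (Module.Dual A ↥W)) (a : (Fin n) →₀ ℕ) (h : a ∈ M₀),
      L x (MvPolynomial.monomial a 1) = bT.repr x ⟨a, h⟩ := by
    intro x a h
    rw [hLrepr, hEval, dif_pos h]
  have hker0 : ∀ x : TensorProduct A B (Module.Dual A ↥W),
      (∀ m ∈ M₀, L x (MvPolynomial.monomial m 1) = 0) → x = 0 := by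
    intro x hx
    refine bT.ext_elem fun m => ?_
    rw [map_zero, Finsupp.coe_zero, Pi.zero_apply, ← hLval x m.1 m.2]
    exact hx m.1 m.2
  constructor
  · intro x y hxy
    have h0 : x - y = 0 := by
      refine hker0 _ fun m hm => ?_
      rw [map_sub, LinearMap.sub_apply, hxy, sub_self]
    exact sub_eq_zero.mp h0
  · let C : Submodule B (Module.Dual B (MvPolynomial (Fin n) B)) :=
      { carrier := {g : Module.Dual B (MvPolynomial (Fin n) B) |
          ∀ m ∈ M₀, g (MvPolynomial.monomial m 1) = 0},
        add_mem' := fun {g₁ g₂} h1 h2 m hm => by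
          rw [LinearMap.add_apply, h1 m hm, h2 m hm, add_zero],
        zero_mem' := fun m hm => rfl,
        smul_mem' := fun b g hg m hm => by
          rw [LinearMap.smul_apply, hg m hm, smul_zero] }
    refine ⟨C, ?_⟩
    constructor
    · rw [Submodule.disjoint_def]
      rintro g ⟨x, rfl⟩ hgC
      rw [hker0 x fun m hm => hgC m hm, map_zero]
    · rw [codisjoint_iff, eq_top_iff]
      intro g _
      have hmem : L (∑ m : {x // x ∈ M₀}, (g (MvPolynomial.monomial m.1 1)) • bT m)
          = ∑ m : {x // x ∈ M₀}, (g (MvPolynomial.monomial m.1 1)) • bB.coord m.1 := by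
        rw [map_sum]
        exact Finset.sum_congr rfl fun m _ => by rw [map_smul, hbTapp]
      refine Submodule.mem_sup.mpr
        ⟨L (∑ m : {x // x ∈ M₀}, (g (MvPolynomial.monomial m.1 1)) • bT m), ⟨_, rfl⟩,
          g - L (∑ m : {x // x ∈ M₀}, (g (MvPolynomial.monomial m.1 1)) • bT m), ?_, by abel⟩
      intro m hm
      rw [LinearMap.sub_apply, hmem, hEval, dif_pos hm, sub_self]

end RelativeApolarity
end
end

section
/- Let X and Y be reduced schemes of finite type over ℂ, and let i : X → Y and π : Y → X be morphisms, each of which is bijective on closed points. If the composition π∘i equals the identity of X, then i is an isomorphism of schemes. -/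
open AlgebraicGeometry CategoryTheory TopologicalSpace

section Auxiliary

/-- In a T0 Jacobson space, a continuous self-map fixing all closed points is the identity. -/
theorem fix_of_jacobson_aux {Y : Type*} [TopologicalSpace Y] [T0Space Y] [JacobsonSpace Y]
    {f : Y → Y} (hf : Continuous f) (hfix : ∀ y ∈ closedPoints Y, f y = y) (y : Y) :
    f y = y := by
  set C := closure ({y} : Set Y) with hC
  have hCc : IsClosed C := isClosed_closure
  have hb : C ⊆ f ⁻¹' C := by
    conv_lhs => rw [← closure_inter_closedPoints hCc]
    refine closure_minimal ?_ (hCc.preimage hf)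
    rintro z ⟨hz1, hz2⟩
    show f z ∈ C
    rwa [hfix z hz2]
  have hzC : f y ∈ C := hb (subset_closure rfl)
  set D := closure ({f y} : Set Y) with hD
  have hDc : IsClosed D := isClosed_closure
  have hDC : D ⊆ C := closure_minimal (Set.singleton_subset_iff.mpr hzC) hCc
  have he : C ⊆ f ⁻¹' D :=
    closure_minimal (Set.singleton_subset_iff.mpr (subset_closure rfl)) (hDc.preimage hf)
  have hCD : C ⊆ D := by
    conv_lhs => rw [← closure_inter_closedPoints hCc]
    refine closure_minimal ?_ hDc
    rintro z ⟨hz1, hz2⟩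
    have : f z ∈ D := he hz1
    rwa [hfix z hz2] at this
  have : closure ({f y} : Set Y) = closure ({y} : Set Y) := le_antisymm hDC hCD
  exact Inseparable.eq (by rwa [inseparable_iff_closure_eq])

/-- The underlying space of a scheme locally of finite type over `ℂ` is a Jacobson space. -/
theorem jacobson_of_lft_aux (Z : Scheme) (s : Z ⟶ Spec (CommRingCat.of ℂ))
    (hlft : LocallyOfFiniteType s) : JacobsonSpace Z := by
  have hjac : ∀ V : Z.affineOpens, IsJacobsonRing Γ(Z, V.1) := by
    intro V
    have htop : IsAffineOpen (⊤ : (Spec (CommRingCat.of ℂ)).Opens) := isAffineOpen_top _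
    have hle : V.1 ≤ s ⁻¹ᵁ ⊤ := fun x _ => trivial
    have hft : (s.appLE ⊤ V.1 hle).hom.FiniteType :=
      LocallyOfFiniteType.finiteType_appLE s htop V.2 hle
    have : IsJacobsonRing Γ(Spec (CommRingCat.of ℂ), ⊤) := by
      refine (isJacobsonRing_iso ?_).mpr (inferInstance : IsJacobsonRing ℂ)
      exact (Scheme.ΓSpecIso (CommRingCat.of ℂ)).commRingCatIsoToRingEquiv
    exact hft.isJacobsonRing
  rw [IsOpenCover.jacobsonSpace_iff (U := fun V : Z.affineOpens => V.1)
    (iSup_affineOpens_eq_top Z)]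
  intro V
  have : IsJacobsonRing Γ(Z, V.1) := hjac V
  have hjs : JacobsonSpace (PrimeSpectrum Γ(Z, V.1)) := inferInstance
  have hemb := @Scheme.Hom.isOpenEmbedding _ _ V.2.fromSpec (IsAffineOpen.isOpenImmersion_fromSpec V.2)
  have hrange : Set.range V.2.fromSpec.base = (V.1 : Set Z) := V.2.range_fromSpec
  let h1 : Spec Γ(Z, V.1) ≃ₜ Set.range V.2.fromSpec.base :=
    hemb.isEmbedding.toHomeomorph
  let h2 : Set.range V.2.fromSpec.base ≃ₜ (V.1 : Set Z) := Homeomorph.setCongr hrange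
  have hjs2 : JacobsonSpace ((V.1 : Set Z)) :=
    JacobsonSpace.of_isOpenEmbedding (Y := PrimeSpectrum Γ(Z, V.1))
      (f := (h1.trans h2).symm) (h1.trans h2).symm.isOpenEmbedding
  exact hjs2

/-- The evaluation from sections over an affine open to the residue field at a closed point
is surjective. -/
theorem eval_surjective_aux (Z : Scheme) {V : Z.Opens} (hV : IsAffineOpen V)
    {y : Z} (hy : IsClosed ({y} : Set Z)) (hyV : y ∈ V) :
    Function.Surjective (Z.evaluation V y hyV) := by
  set p := hV.primeIdealOf ⟨y, hyV⟩ with hp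
  have hfs : hV.fromSpec.base p = y := hV.fromSpec_primeIdealOf ⟨y, hyV⟩
  have hinj : Function.Injective hV.fromSpec.base :=
    (Scheme.Hom.isOpenEmbedding hV.fromSpec).injective
  have hpc : IsClosed ({p} : Set (PrimeSpectrum Γ(Z, V))) := by
    have : ({p} : Set (PrimeSpectrum Γ(Z, V))) = hV.fromSpec.base ⁻¹' {y} := by
      ext q
      simp only [Set.mem_singleton_iff, Set.mem_preimage]
      constructor
      · rintro rfl; exact hfs
      · intro h; exact hinj (h.trans hfs.symm)
    rw [this]
    exact hy.preimage hV.fromSpec.base.hom.continuous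
  have hpm : p.asIdeal.IsMaximal := (PrimeSpectrum.isClosed_singleton_iff_isMaximal p).mp hpc
  letI : Algebra Γ(Z, V) (Z.presheaf.stalk y) :=
    TopCat.Presheaf.algebra_section_stalk Z.presheaf ⟨y, hyV⟩
  have hloc : IsLocalization.AtPrime (Z.presheaf.stalk y) p.asIdeal :=
    hV.isLocalization_stalk ⟨y, hyV⟩
  intro ξ
  obtain ⟨z, rfl⟩ := Z.residue_surjective y ξ
  obtain ⟨⟨a, s⟩, hz⟩ := IsLocalization.surj (M := p.asIdeal.primeCompl) z
  obtain ⟨t, c, hc, htc⟩ := hpm.exists_inv s.2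
  refine ⟨a * t, ?_⟩
  have halg : (algebraMap Γ(Z, V) (Z.presheaf.stalk y)) = (Z.presheaf.germ V y hyV).hom :=
    TopCat.Presheaf.stalk_open_algebraMap Z.presheaf (⟨y, hyV⟩ : V)
  have hev : ∀ b : Γ(Z, V), Z.evaluation V y hyV b =
      IsLocalRing.residue _ (algebraMap Γ(Z, V) (Z.presheaf.stalk y) b) := by
    intro b; rw [halg]; rfl
  rw [hev]
  have hres : ∀ w : Z.presheaf.stalk y, (Z.residue y) w = IsLocalRing.residue _ w := fun _ => rfl
  rw [hres]
  have h1 : IsLocalRing.residue (Z.presheaf.stalk y)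
      (algebraMap Γ(Z, V) (Z.presheaf.stalk y) c) = 0 := by
    rw [IsLocalRing.residue_eq_zero_iff]
    exact (IsLocalization.AtPrime.to_map_mem_maximal_iff (Z.presheaf.stalk y) p.asIdeal c).mpr hc
  have h2 : IsLocalRing.residue (Z.presheaf.stalk y)
      (algebraMap Γ(Z, V) (Z.presheaf.stalk y) (t * s.1)) = 1 := by
    have : (t : Γ(Z, V)) * s.1 = 1 - c := by rw [← htc]; ring
    rw [this, map_sub, map_sub, map_one, h1, sub_zero, map_one]
  calc IsLocalRing.residue _ (algebraMap Γ(Z, V) (Z.presheaf.stalk y) (a * t))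
      = IsLocalRing.residue _ (algebraMap Γ(Z, V) (Z.presheaf.stalk y) a)
        * IsLocalRing.residue _ (algebraMap Γ(Z, V) (Z.presheaf.stalk y) t) := by
        rw [map_mul, map_mul]
    _ = IsLocalRing.residue _ z := by
        rw [← hz, map_mul]
        have h2' : IsLocalRing.residue (Z.presheaf.stalk y)
              (algebraMap Γ(Z, V) (Z.presheaf.stalk y) t)
            * IsLocalRing.residue (Z.presheaf.stalk y)
              (algebraMap Γ(Z, V) (Z.presheaf.stalk y) s.1) = 1 := by
          rw [← map_mul, ← map_mul]; exact h2
        linear_combination IsLocalRing.residue (Z.presheaf.stalk y) z * h2'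

/-- The structure map from `ℂ` to the residue field of a point of a scheme over `ℂ`. -/
noncomputable def uMapAux (Z : Scheme) (s : Z ⟶ Spec (CommRingCat.of ℂ)) (y : Z) :
    CommRingCat.of ℂ ⟶ Z.residueField y :=
  (Scheme.ΓSpecIso (CommRingCat.of ℂ)).inv ≫ s.appTop ≫ Z.Γevaluation y

theorem uMapAux_congr {Z : Scheme} (s : Z ⟶ Spec (CommRingCat.of ℂ)) {p q : Z} (h : p = q) :
    uMapAux Z s p ≫ (Z.residueFieldCongr h).hom = uMapAux Z s q := by
  subst h; simp

theorem eval_point_congr_aux {Z : Scheme} {U : Z.Opens} {p q : Z} (h : p = q) (hp : p ∈ U) :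
    Z.evaluation U p hp ≫ (Z.residueFieldCongr h).hom = Z.evaluation U q (h ▸ hp) := by
  subst h; simp

/-- At a closed point, the structure map `ℂ → κ(y)` is surjective (Nullstellensatz). -/
theorem uMapAux_surjective (Z : Scheme) (s : Z ⟶ Spec (CommRingCat.of ℂ))
    (hlft : LocallyOfFiniteType s) (y : Z) (hy : IsClosed ({y} : Set Z)) :
    Function.Surjective (uMapAux Z s y) := by
  obtain ⟨V, hVaff, hyV, -⟩ := Opens.isBasis_iff_nbhd.mp Z.isBasis_affineOpens
    (U := ⊤) (x := y) (show y ∈ (⊤ : Z.Opens) from trivial)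
  have hle : V ≤ s ⁻¹ᵁ ⊤ := fun x _ => trivial
  have key : (Z.presheaf.map (homOfLE (le_top : V ≤ ⊤)).op) ≫ Z.presheaf.germ V y hyV
      = Z.presheaf.germ ⊤ y trivial := Z.presheaf.germ_res _ y hyV
  have hfact : uMapAux Z s y =
      ((Scheme.ΓSpecIso (CommRingCat.of ℂ)).inv ≫ s.appLE ⊤ V hle) ≫
        Z.evaluation V y hyV := by
    show (Scheme.ΓSpecIso (CommRingCat.of ℂ)).inv ≫ s.app ⊤ ≫
        Z.presheaf.germ ⊤ y trivial ≫ Z.residue y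
      = (Scheme.ΓSpecIso (CommRingCat.of ℂ)).inv ≫
        (s.app ⊤ ≫ Z.presheaf.map (homOfLE (le_top : V ≤ ⊤)).op) ≫
        Z.presheaf.germ V y hyV ≫ Z.residue y
    rw [← key]
    simp only [Category.assoc]; rfl
  have hft : (s.appLE ⊤ V hle).hom.FiniteType :=
    LocallyOfFiniteType.finiteType_appLE s (isAffineOpen_top _) hVaff hle
  have hsurj := eval_surjective_aux Z hVaff hy hyV
  have huft : (uMapAux Z s y).hom.FiniteType := by
    rw [hfact]
    show (RingHom.comp (Z.evaluation V y hyV).hom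
      (RingHom.comp (s.appLE ⊤ V hle).hom (Scheme.ΓSpecIso (CommRingCat.of ℂ)).inv.hom)).FiniteType
    exact RingHom.FiniteType.comp_surjective
      (hft.comp (RingHom.FiniteType.of_surjective _
        (((Scheme.ΓSpecIso (CommRingCat.of ℂ)).commRingCatIsoToRingEquiv).symm.surjective)))
      hsurj
  letI : Algebra ℂ (Z.residueField y) := (uMapAux Z s y).hom.toAlgebra
  haveI : Algebra.FiniteType ℂ (Z.residueField y) := huft
  haveI : Module.Finite ℂ (Z.residueField y) :=
    finite_of_finite_type_of_isJacobsonRing ℂ (Z.residueField y)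
  haveI : Algebra.IsIntegral ℂ (Z.residueField y) := Algebra.IsIntegral.of_finite _ _
  have := (IsAlgClosed.algebraMap_bijective_of_isIntegral (k := ℂ) (K := Z.residueField y)).2
  rwa [RingHom.algebraMap_toAlgebra] at this

/-- If `e` is an endomorphism over `ℂ` fixing a point `y` whose residue field is generated by
`ℂ`, then the induced map on the residue field at `y` is the canonical identification. -/
theorem rfm_eq_aux {Y : Scheme} {sY : Y ⟶ Spec (CommRingCat.of ℂ)}
    (e : Y ⟶ Y) (he : e ≫ sY = sY) (y : Y)
    (hsurj : Function.Surjective (uMapAux Y sY y))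
    (heb : e.base y = y) :
    e.residueFieldMap y = (Y.residueFieldCongr heb).hom := by
  have hnat : uMapAux Y sY (e.base y) ≫ e.residueFieldMap y = uMapAux Y sY y := by
    rw [uMapAux, uMapAux, Category.assoc, Category.assoc, Scheme.Γevaluation_naturality]
    have hc : sY.appTop ≫ e.appTop = sY.appTop := by
      show sY.appTop ≫ e.appTop = sY.appTop
      rw [← Scheme.Hom.comp_appTop, he]
    rw [← Category.assoc (sY.appTop), hc]
  have hu2 : uMapAux Y sY y ≫ (Y.residueFieldCongr heb.symm).hom = uMapAux Y sY (e.base y) :=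
    uMapAux_congr sY heb.symm
  have hpsi : uMapAux Y sY y ≫ ((Y.residueFieldCongr heb.symm).hom ≫ e.residueFieldMap y)
      = uMapAux Y sY y := by rw [← Category.assoc, hu2, hnat]
  have : (Y.residueFieldCongr heb.symm).hom ≫ e.residueFieldMap y = 𝟙 _ := by
    apply CommRingCat.hom_ext; apply RingHom.ext
    intro ξ
    obtain ⟨c, rfl⟩ := hsurj ξ
    exact congrArg (fun f => f.hom c) hpsi
  calc e.residueFieldMap y
      = (Y.residueFieldCongr heb).hom ≫
        ((Y.residueFieldCongr heb.symm).hom ≫ e.residueFieldMap y) := by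
        rw [← Category.assoc]; simp
    _ = (Y.residueFieldCongr heb).hom := by rw [this, Category.comp_id]

/-- Key computation: an endomorphism over `ℂ` of a reduced Jacobson scheme which is the identity
on points acts as the identity on sections. -/
theorem app_eq_aux {Y : Scheme} [AlgebraicGeometry.IsReduced Y] [JacobsonSpace Y]
    {sY : Y ⟶ Spec (CommRingCat.of ℂ)} (hYlft : LocallyOfFiniteType sY)
    (e : Y ⟶ Y) (heY : e ≫ sY = sY) (hbase : ∀ y : Y, e.base y = y)
    (U : Y.Opens) (H : U = e ⁻¹ᵁ U) (s : Γ(Y, U)) :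
    Y.presheaf.map (eqToHom H).op (e.app U s) = s := by
  rw [← sub_eq_zero]
  set t := Y.presheaf.map (eqToHom H).op (e.app U s) - s with ht_def
  rw [← basicOpen_eq_bot_iff]
  by_contra hne
  have hnonempty : ((Y.basicOpen t : Set Y)).Nonempty := by
    by_contra hempty
    rw [Set.not_nonempty_iff_eq_empty] at hempty
    exact hne (by ext z; simp [hempty])
  obtain ⟨y, hyb, hycl⟩ := nonempty_inter_closedPoints hnonempty
    (Y.basicOpen t).isOpen.isLocallyClosed
  have hyU : y ∈ U := Y.basicOpen_le t hyb
  have heby : e.base y = y := hbase y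
  have hyeU : e.base y ∈ U := by rwa [heby]
  have hevne : Y.evaluation U y hyU t ≠ 0 :=
    (Y.evaluation_ne_zero_iff_mem_basicOpen y hyU t).mpr hyb
  apply hevne
  rw [ht_def, map_sub]
  have step1 : Y.evaluation U y hyU (Y.presheaf.map (eqToHom H).op (e.app U s))
      = Y.evaluation (e ⁻¹ᵁ U) y (show y ∈ e ⁻¹ᵁ U from hyeU) (e.app U s) := by
    show Y.residue y (Y.presheaf.germ _ y hyU (Y.presheaf.map (eqToHom H).op (e.app U s)))
      = Y.residue y (Y.presheaf.germ _ y _ (e.app U s))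
    congr 1
    exact Y.presheaf.germ_res_apply (eqToHom H) y hyU (e.app U s)
  have step2 : Y.evaluation (e ⁻¹ᵁ U) y (show y ∈ e ⁻¹ᵁ U from hyeU) (e.app U s)
      = Y.evaluation U y hyU s := by
    have hnat := Scheme.evaluation_naturality_apply e (V := U) y hyeU s
    rw [← hnat]
    have hrfm : e.residueFieldMap y = (Y.residueFieldCongr heby).hom :=
      rfm_eq_aux e heY y (uMapAux_surjective Y sY hYlft y hycl) heby
    rw [hrfm]
    exact congrArg (fun f => f.hom s) (eval_point_congr_aux heby hyeU)
  rw [step1, step2]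
  exact sub_self _

end Auxiliary

/-- Let `X` and `Y` be reduced schemes of finite type over `ℂ`, and let
`i : X → Y` and `π : Y → X` be morphisms over `ℂ`, each bijective on closed points. If
`π ∘ i = id_X`, then `i` is an isomorphism of schemes. -/
theorem isIso_of_bijective_on_closed_points_section
    (X Y : Scheme) [IsReduced X] [IsReduced Y]
    (sX : X ⟶ Spec (CommRingCat.of ℂ)) (sY : Y ⟶ Spec (CommRingCat.of ℂ))
    (hXlft : LocallyOfFiniteType sX) (hXqc : QuasiCompact sX)
    (hYlft : LocallyOfFiniteType sY) (hYqc : QuasiCompact sY)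
    (i : X ⟶ Y) (π : Y ⟶ X)
    (hi : i ≫ sY = sX) (hπ : π ≫ sX = sY)
    (hibij : Set.BijOn i.base
      {x : X | IsClosed ({x} : Set X)} {y : Y | IsClosed ({y} : Set Y)})
    (hπbij : Set.BijOn π.base
      {y : Y | IsClosed ({y} : Set Y)} {x : X | IsClosed ({x} : Set X)})
    (hsection : i ≫ π = 𝟙 X) :
    IsIso i := by
  haveI hJac : JacobsonSpace Y := jacobson_of_lft_aux Y sY hYlft
  set e : Y ⟶ Y := π ≫ i with he_def
  have heY : e ≫ sY = sY := by rw [he_def, Category.assoc, hi, hπ]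
  have hretr : ∀ x : X, π.base (i.base x) = x := by
    intro x
    have h := Scheme.Hom.comp_apply i π x
    rw [hsection] at h
    exact h.symm
  have hfixcp : ∀ y ∈ closedPoints Y, e.base y = y := by
    intro y hy
    have hyC : IsClosed ({y} : Set Y) := hy
    have hx : IsClosed ({π.base y} : Set X) := hπbij.mapsTo hyC
    have h1 : IsClosed ({i.base (π.base y)} : Set Y) := hibij.mapsTo hx
    have h2 : π.base (i.base (π.base y)) = π.base y := hretr _
    have h3 : i.base (π.base y) = y := hπbij.injOn h1 hyC h2
    show (π ≫ i).base y = y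
    simpa using h3
  have hbase : ∀ y : Y, e.base y = y := fun y =>
    fix_of_jacobson_aux e.continuous hfixcp y
  have hbase_eq : e.base = (𝟙 Y : Y ⟶ Y).base := by
    rw [Scheme.Hom.id_base]
    ext y
    exact hbase y
  have hkey : e = 𝟙 Y := by
    apply Scheme.Hom.ext hbase_eq
    intro U
    rw [Scheme.Hom.id_app]
    apply CommRingCat.hom_ext; apply RingHom.ext
    intro s
    have H : U = e ⁻¹ᵁ U := by
      apply Opens.ext
      ext z
      show z ∈ (U : Set Y) ↔ e.base z ∈ (U : Set Y)
      rw [hbase z]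
    exact app_eq_aux hYlft e heY hbase U H s
  exact ⟨π, hsection, hkey⟩
end
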